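/- arXiv:2604.20189 — 5 statements merged into one kernel-verified Lean document; each statement's English description precedes it below -/
import Mathlib

section
/- Assume k < d. Then max{deg(u) : u ∈ T} = max_{0 ≤ i ≤ d−1} deg(w_i) − 2 = max_{0 ≤ i ≤ d−1} (ω₁(i) + ω₂(d−i))/d − 2; in particular the supremum of deg over T is finite and attained. -/
namespace ProjMonomialCurve

/-- The numerical semigroup generated by `a 1, …, a k` (equivalently by `A₁ = {0,a 1,…,a k}`). -/
def S1 (k : ℕ) (a : ℕ → ℕ) : Set ℕ :=
  {n | ∃ x : ℕ → ℕ, n = ∑ i ∈ Finset.Icc 1 k, x i * a i}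

/-- The numerical semigroup generated by the nonzero elements `d - a i` (`0 ≤ i ≤ k-1`)
of `A₂`, where `d = a k`. -/
def S2 (k : ℕ) (a : ℕ → ℕ) : Set ℕ :=
  {n | ∃ x : ℕ → ℕ, n = ∑ i ∈ Finset.range k, x i * (a k - a i)}

/-- `δ₁ n`: least total number of summands over representations `n = ∑ xᵢ aᵢ`. -/
noncomputable def delta1 (k : ℕ) (a : ℕ → ℕ) (n : ℕ) : ℕ :=
  sInf {m | ∃ x : ℕ → ℕ, n = ∑ i ∈ Finset.Icc 1 k, x i * a i ∧ m = ∑ i ∈ Finset.Icc 1 k, x i}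

/-- `δ₂ n`: least total number of summands over representations of `n` by the
nonzero elements of `A₂`. -/
noncomputable def delta2 (k : ℕ) (a : ℕ → ℕ) (n : ℕ) : ℕ :=
  sInf {m | ∃ x : ℕ → ℕ,
    n = ∑ i ∈ Finset.range k, x i * (a k - a i) ∧ m = ∑ i ∈ Finset.range k, x i}

/-- `ω₁ i`: the least element of `S₍₁₎` congruent to `i` modulo `d = a k`. -/
noncomputable def omega1 (k : ℕ) (a : ℕ → ℕ) (i : ℕ) : ℕ :=
  sInf {n | n ∈ S1 k a ∧ n % a k = i % a k}

/-- `ω₂ i`: the least element of `S₍₂₎` congruent to `i` modulo `d = a k`. -/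
noncomputable def omega2 (k : ℕ) (a : ℕ → ℕ) (i : ℕ) : ℕ :=
  sInf {n | n ∈ S2 k a ∧ n % a k = i % a k}

/-- `w i = (ω₁(i), ω₂(d-i))`. -/
noncomputable def w (k : ℕ) (a : ℕ → ℕ) (i : ℕ) : ℕ × ℕ :=
  (omega1 k a i, omega2 k a (a k - i))

/-- `e h = (h, d - h)`. -/
def e (k : ℕ) (a : ℕ → ℕ) (h : ℕ) : ℕ × ℕ := (h, a k - h)

/-- The affine semigroup `S ⊆ ℕ²` generated by `e (a 0), …, e (a k)`. -/
def S (k : ℕ) (a : ℕ → ℕ) : Set (ℕ × ℕ) :=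
  {u | ∃ x : ℕ → ℕ, u = ∑ i ∈ Finset.range (k+1), x i • e k a (a i)}

/-- `S' = {u ∈ ℕ² | u + p•e₀ ∈ S and u + p•e_d ∈ S for some p ∈ ℕ}`. -/
def S' (k : ℕ) (a : ℕ → ℕ) : Set (ℕ × ℕ) :=
  {u | ∃ p : ℕ, u + p • e k a 0 ∈ S k a ∧ u + p • e k a (a k) ∈ S k a}

/-- `deg u = (u₁ + u₂)/d` for `u ∈ ℕ²`. -/
def deg (k : ℕ) (a : ℕ → ℕ) (u : ℕ × ℕ) : ℕ := (u.1 + u.2) / a k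

/-- The index set `𝕀`. -/
noncomputable def II (k : ℕ) (a : ℕ → ℕ) : Set ℕ :=
  {i | 1 ≤ i ∧ i ≤ a k - 1 ∧ (∀ j, 1 ≤ j → j ≤ k - 1 → i ≠ a j) ∧
    deg k a (w k a i) < delta1 k a (w k a i).1}

/-- `T = {u ∈ ℤ² | d ∣ u₁+u₂, u₁ ∉ S₍₁₎, u₂ ∉ S₍₂₎}`. -/
def T (k : ℕ) (a : ℕ → ℕ) : Set (ℤ × ℤ) :=
  {u | (a k : ℤ) ∣ u.1 + u.2 ∧ (∀ n ∈ S1 k a, (n : ℤ) ≠ u.1) ∧ (∀ n ∈ S2 k a, (n : ℤ) ≠ u.2)}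

/-- `deg` for integer points. -/
def degZ (k : ℕ) (a : ℕ → ℕ) (u : ℤ × ℤ) : ℤ := (u.1 + u.2) / (a k : ℤ)

/-- The Castelnuovo–Mumford regularity, expressed combinatorially:
`max({deg u + 1 : u ∈ S'∖S} ∪ {deg u + 2 : u ∈ T})`. -/
noncomputable def reg (k : ℕ) (a : ℕ → ℕ) : ℤ :=
  sSup ({z : ℤ | ∃ u ∈ S' k a \ S k a, z = (deg k a u : ℤ) + 1} ∪
        {z : ℤ | ∃ u ∈ T k a, z = degZ k a u + 2})

/-- Frobenius number of `S₍₁₎` (greatest integer not in it; `-1` if the semigroup is all of `ℕ`). -/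
noncomputable def F1 (k : ℕ) (a : ℕ → ℕ) : ℤ :=
  sSup {z : ℤ | ∀ n ∈ S1 k a, (n : ℤ) ≠ z}

/-- Frobenius number of `S₍₂₎`. -/
noncomputable def F2 (k : ℕ) (a : ℕ → ℕ) : ℤ :=
  sSup {z : ℤ | ∀ n ∈ S2 k a, (n : ℤ) ≠ z}

/-- The largest gap `λ_max = max_{1 ≤ i ≤ k} (a i - a (i-1) - 1)`. -/
def lamMax (k : ℕ) (a : ℕ → ℕ) : ℕ :=
  (Finset.Icc 1 k).sup (fun i => a i - a (i-1) - 1)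

/-- The second largest gap: the minimum over `i` of the largest gap among indices `≠ i`. -/
noncomputable def lamSl (k : ℕ) (a : ℕ → ℕ) : ℕ :=
  sInf {m | ∃ i, 1 ≤ i ∧ i ≤ k ∧
    m = ((Finset.Icc 1 k).erase i).sup (fun j => a j - a (j-1) - 1)}

/-- The set `A₁ = {a 0, a 1, …, a k}`. -/
def A1set (k : ℕ) (a : ℕ → ℕ) : Set ℕ := {m | ∃ j ≤ k, a j = m}

/-!
If `M ⊆ ℕ` is closed under adding `d` and `ω` is its least element in a residue class modulo
`d`, then the class meets `M` exactly in the integers `≥ ω`, so the largest integer of the class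
outside `M` is `ω - d`. Both `S₍₁₎` and `S₍₂₎` contain `d` and, because the `aᵢ` are coprime,
meet every residue class. Hence a point `u ∈ T` with `u₁ ≡ i` satisfies `u₁ ≤ ω₁(i) - d` and,
as `u₂ ≡ d - i`, also `u₂ ≤ ω₂(d - i) - d`, so `deg u ≤ deg wᵢ - 2`; the point `wᵢ - (d, d)`
lies in `T` and attains this bound.
-/

lemma exists_sum_natCast_mul_eq {s : Finset ℕ} {f : ℕ → ℕ} (hs : s.gcd f = 1)
    {d : ℕ} [NeZero d] (z : ZMod d) : ∃ x : ℕ → ℕ, ∑ j ∈ s, (x j : ZMod d) * f j = z := by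
  obtain ⟨c, hc⟩ := Finset.gcd_eq_sum_mul s (fun j => (f j : ℤ))
  have hc1 : s.gcd (fun j => (f j : ℤ)) = 1 := by
    have hdvd : (s.gcd fun j => (f j : ℤ)).natAbs ∣ 1 :=
      hs ▸ Finset.dvd_gcd fun j hj => Int.natAbs_dvd_natAbs.mpr (Finset.gcd_dvd hj)
    have := Nat.dvd_one.mp hdvd
    have := Finset.Int.finsetGcd_nonneg (s := s) (f := fun j => (f j : ℤ))
    omega
  have hsum : ∑ j ∈ s, (f j : ZMod d) * c j = 1 := by
    exact_mod_cast congrArg (Int.cast (R := ZMod d)) (hc1 ▸ hc).symm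
  refine ⟨fun j => (z * c j).val, ?_⟩
  simp only [ZMod.natCast_zmod_val]
  calc ∑ j ∈ s, z * c j * f j = z * ∑ j ∈ s, (f j : ZMod d) * c j := by
        rw [Finset.mul_sum]; exact Finset.sum_congr rfl fun j _ => by ring
    _ = z := by rw [hsum, mul_one]

section LeastInClass

variable {M : Set ℕ} {d i : ℕ}

-- `omega1 k a` and `omega2 k a` are `leastInClass (S1 k a) (a k)` and
-- `leastInClass (S2 k a) (a k)` by definition.
noncomputable def leastInClass (M : Set ℕ) (d i : ℕ) : ℕ :=
  sInf {n | n ∈ M ∧ n % d = i % d}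

lemma leastInClass_spec (h : ∃ n ∈ M, n % d = i % d) :
    leastInClass M d i ∈ M ∧ leastInClass M d i % d = i % d :=
  Nat.sInf_mem h

lemma leastInClass_le {n : ℕ} (hn : n ∈ M) (h : n % d = i % d) : leastInClass M d i ≤ n :=
  Nat.sInf_le ⟨hn, h⟩

lemma add_mul_mem_of_add_mem (hadd : ∀ n ∈ M, n + d ∈ M) {n : ℕ} (hn : n ∈ M) (m : ℕ) :
    n + m * d ∈ M := by
  induction m with
  | zero => simp [hn]
  | succ m ih => rw [add_mul, one_mul, ← add_assoc]; exact hadd _ ih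

lemma isGreatest_leastInClass_sub (hd : 0 < d) (hadd : ∀ n ∈ M, n + d ∈ M)
    (h : ∃ n ∈ M, n % d = i % d) :
    IsGreatest {u : ℤ | u ≡ i [ZMOD d] ∧ ∀ n ∈ M, (n : ℤ) ≠ u}
      ((leastInClass M d i : ℤ) - d) := by
  obtain ⟨hmem, hmod⟩ := leastInClass_spec h
  have hmodZ : (leastInClass M d i : ℤ) ≡ i [ZMOD d] := by exact_mod_cast hmod
  refine ⟨⟨(Int.ModEq.sub_right _ hmodZ).trans ?_, fun n hn hne => ?_⟩, ?_⟩
  · exact Int.modEq_iff_dvd.mpr ⟨1, by ring⟩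
  · have hle := leastInClass_le (d := d) (i := i) hn ?_
    · omega
    · have : (n : ℤ) + d = leastInClass M d i := by omega
      have : n + d = leastInClass M d i := by exact_mod_cast this
      rw [← hmod, ← this, Nat.add_mod_right]
  · rintro u ⟨hu, hnot⟩
    obtain ⟨m, hm⟩ := (hmodZ.trans hu.symm).dvd
    by_contra! hlt
    have hm0 : 0 ≤ m := by
      by_contra! hneg
      nlinarith [(Int.natCast_pos.mpr hd : (0 : ℤ) < d)]
    refine hnot _ (add_mul_mem_of_add_mem hadd hmem m.toNat) ?_
    push_cast [Int.toNat_of_nonneg hm0]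
    linarith

end LeastInClass

lemma sum_range_eq_sum_Icc_of_eq_zero {R : Type*} [AddCommMonoid R] {g : ℕ → R} {k : ℕ}
    (h0 : g 0 = 0) (hk : g k = 0) : ∑ j ∈ Finset.range k, g j = ∑ j ∈ Finset.Icc 1 k, g j := by
  rw [← add_zero (∑ j ∈ Finset.range k, g j), ← hk, ← Finset.sum_range_succ,
    Finset.sum_range_eq_add_Ico _ (by omega : 0 < k + 1), h0, zero_add,
    ← Finset.Ico_add_one_right_eq_Icc]

section Semigroups

variable {k : ℕ} {a : ℕ → ℕ}

lemma add_mem_S1 (ha0 : a 0 = 0) {n : ℕ} (hn : n ∈ S1 k a) : n + a k ∈ S1 k a := by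
  obtain ⟨x, rfl⟩ := hn
  refine ⟨x + Pi.single k 1, ?_⟩
  simp [add_mul, Finset.sum_add_distrib, Pi.single_apply]
  rintro rfl
  exact ha0

lemma add_mem_S2 (ha0 : a 0 = 0) {n : ℕ} (hn : n ∈ S2 k a) : n + a k ∈ S2 k a := by
  obtain ⟨x, rfl⟩ := hn
  refine ⟨x + Pi.single 0 1, ?_⟩
  simp [add_mul, Finset.sum_add_distrib, Pi.single_apply, ha0]
  rintro rfl
  exact ha0

lemma exists_mem_S1_mod_eq (hgcd : (Finset.Icc 1 k).gcd a = 1) (hd : 0 < a k) (i : ℕ) :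
    ∃ n ∈ S1 k a, n % a k = i % a k := by
  have := NeZero.of_pos hd
  obtain ⟨x, hx⟩ := exists_sum_natCast_mul_eq hgcd (i : ZMod (a k))
  exact ⟨_, ⟨x, rfl⟩, (ZMod.natCast_eq_natCast_iff' _ _ _).mp (by push_cast; exact hx)⟩

lemma exists_mem_S2_mod_eq (ha0 : a 0 = 0) (hle : ∀ j < k, a j ≤ a k)
    (hgcd : (Finset.Icc 1 k).gcd a = 1) (hd : 0 < a k) (i : ℕ) :
    ∃ n ∈ S2 k a, n % a k = i % a k := by
  have := NeZero.of_pos hd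
  obtain ⟨x, hx⟩ := exists_sum_natCast_mul_eq hgcd (-(i : ZMod (a k)))
  refine ⟨_, ⟨x, rfl⟩, (ZMod.natCast_eq_natCast_iff' _ _ _).mp ?_⟩
  push_cast
  calc ∑ j ∈ Finset.range k, (x j : ZMod (a k)) * ((a k - a j : ℕ) : ZMod (a k))
      = -∑ j ∈ Finset.range k, (x j : ZMod (a k)) * a j := by
        rw [← Finset.sum_neg_distrib]
        refine Finset.sum_congr rfl fun j hj => ?_
        rw [Nat.cast_sub (hle j (Finset.mem_range.1 hj)), ZMod.natCast_self]
        ring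
    _ = -∑ j ∈ Finset.Icc 1 k, (x j : ZMod (a k)) * a j := by
        rw [sum_range_eq_sum_Icc_of_eq_zero (by simp [ha0]) (by simp)]
    _ = i := by rw [hx, neg_neg]

lemma isGreatest_omega1_sub (ha0 : a 0 = 0) (hgcd : (Finset.Icc 1 k).gcd a = 1)
    (hd : 0 < a k) (i : ℕ) :
    IsGreatest {u : ℤ | u ≡ i [ZMOD a k] ∧ ∀ n ∈ S1 k a, (n : ℤ) ≠ u}
      ((omega1 k a i : ℤ) - a k) :=
  isGreatest_leastInClass_sub hd (fun _ => add_mem_S1 ha0) (exists_mem_S1_mod_eq hgcd hd i)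

lemma isGreatest_omega2_sub (ha0 : a 0 = 0) (hle : ∀ j < k, a j ≤ a k)
    (hgcd : (Finset.Icc 1 k).gcd a = 1) (hd : 0 < a k) (i : ℕ) :
    IsGreatest {u : ℤ | u ≡ i [ZMOD a k] ∧ ∀ n ∈ S2 k a, (n : ℤ) ≠ u}
      ((omega2 k a i : ℤ) - a k) :=
  isGreatest_leastInClass_sub hd (fun _ => add_mem_S2 ha0)
    (exists_mem_S2_mod_eq ha0 hle hgcd hd i)

lemma mul_deg_w (ha0 : a 0 = 0) (hle : ∀ j < k, a j ≤ a k)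
    (hgcd : (Finset.Icc 1 k).gcd a = 1) (hd : 0 < a k) {i : ℕ} (hi : i ≤ a k) :
    a k * deg k a (w k a i) = omega1 k a i + omega2 k a (a k - i) := by
  have h1 : omega1 k a i % a k = i % a k := (leastInClass_spec (exists_mem_S1_mod_eq hgcd hd i)).2
  have h2 : omega2 k a (a k - i) % a k = (a k - i) % a k :=
    (leastInClass_spec (exists_mem_S2_mod_eq ha0 hle hgcd hd (a k - i))).2
  refine Nat.mul_div_cancel' (Nat.dvd_of_mod_eq_zero ?_)
  rw [w, Nat.add_mod, h1, h2, ← Nat.add_mod, Nat.add_sub_cancel' hi, Nat.mod_self]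

lemma omega_sub_mem_T (ha0 : a 0 = 0) (hle : ∀ j < k, a j ≤ a k)
    (hgcd : (Finset.Icc 1 k).gcd a = 1) (hd : 0 < a k) {i : ℕ} (hi : i ≤ a k) :
    ((omega1 k a i : ℤ) - a k, (omega2 k a (a k - i) : ℤ) - a k) ∈ T k a ∧
      degZ k a ((omega1 k a i : ℤ) - a k, (omega2 k a (a k - i) : ℤ) - a k) =
        deg k a (w k a i) - 2 := by
  have hsum : ((omega1 k a i : ℤ) - a k) + ((omega2 k a (a k - i) : ℤ) - a k) =
      a k * ((deg k a (w k a i) : ℤ) - 2) := by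
    have := congrArg (Nat.cast (R := ℤ)) (mul_deg_w ha0 hle hgcd hd hi)
    push_cast at this
    linear_combination -this
  refine ⟨⟨⟨_, hsum⟩, (isGreatest_omega1_sub ha0 hgcd hd i).1.2,
    (isGreatest_omega2_sub ha0 hle hgcd hd (a k - i)).1.2⟩, ?_⟩
  rw [degZ, hsum, Int.mul_ediv_cancel_left _ (by exact_mod_cast hd.ne')]

lemma exists_degZ_le (ha0 : a 0 = 0) (hle : ∀ j < k, a j ≤ a k)
    (hgcd : (Finset.Icc 1 k).gcd a = 1) (hd : 0 < a k) {u : ℤ × ℤ} (hu : u ∈ T k a) :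
    ∃ i < a k, degZ k a u ≤ deg k a (w k a i) - 2 := by
  obtain ⟨⟨m, hm⟩, hu1, hu2⟩ := hu
  have hdZ : (0 : ℤ) < a k := by exact_mod_cast hd
  set i := (u.1 % a k).toNat
  have hi : (i : ℤ) = u.1 % a k := Int.toNat_of_nonneg (Int.emod_nonneg _ hdZ.ne')
  have hik : i < a k := by have := Int.emod_lt_of_pos u.1 hdZ; omega
  have hmod1 : u.1 ≡ i [ZMOD a k] := by rw [hi]; exact (Int.mod_modEq _ _).symm
  have hmod2 : u.2 ≡ (a k - i : ℕ) [ZMOD a k] := by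
    refine Int.modEq_iff_dvd.mpr ⟨1 + u.1 / a k - m, ?_⟩
    push_cast [Nat.cast_sub hik.le]
    linear_combination -hi - Int.emod_def u.1 (a k) - hm
  have hle1 := (isGreatest_omega1_sub ha0 hgcd hd i).2 ⟨hmod1, hu1⟩
  have hle2 := (isGreatest_omega2_sub ha0 hle hgcd hd (a k - i)).2 ⟨hmod2, hu2⟩
  have hw := congrArg (Nat.cast (R := ℤ)) (mul_deg_w ha0 hle hgcd hd hik.le)
  push_cast at hw
  refine ⟨i, hik, ?_⟩
  rw [degZ, hm, Int.mul_ediv_cancel_left _ hdZ.ne']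
  nlinarith

end Semigroups

theorem statement_7_general (k : ℕ) (a : ℕ → ℕ) (ha0 : a 0 = 0)
    (hmono : ∀ i, i < k → a i < a (i+1)) (hgcd : (Finset.Icc 1 k).gcd a = 1) (hkd : k < a k) :
    IsGreatest {z : ℤ | ∃ u ∈ T k a, z = degZ k a u}
      (((((Finset.range (a k)).sup fun i => deg k a (w k a i)) : ℕ) : ℤ) - 2) ∧
    ((Finset.range (a k)).sup fun i => deg k a (w k a i)) =
      ((Finset.range (a k)).sup fun i => (omega1 k a i + omega2 k a (a k - i)) / a k) := by
  have hd : 0 < a k := by omega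
  have hle : ∀ j < k, a j ≤ a k := fun j hj =>
    (strictMonoOn_Iic_of_lt_succ hmono).monotoneOn (Set.mem_Iic.2 hj.le) (Set.mem_Iic.2 le_rfl)
      hj.le
  obtain ⟨i₀, hi₀, hsup⟩ := Finset.exists_mem_eq_sup (Finset.range (a k))
    ⟨0, Finset.mem_range.2 hd⟩ fun i => deg k a (w k a i)
  obtain ⟨hT, hdeg⟩ := omega_sub_mem_T ha0 hle hgcd hd (Finset.mem_range.1 hi₀).le
  refine ⟨⟨⟨_, hT, by rw [hdeg, hsup]⟩, ?_⟩, rfl⟩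
  rintro _ ⟨u, hu, rfl⟩
  obtain ⟨i, hi, hle⟩ := exists_degZ_le ha0 hle hgcd hd hu
  have := Finset.le_sup (f := fun i => deg k a (w k a i)) (Finset.mem_range.2 hi)
  omega

theorem statement_7 (k : ℕ) (a : ℕ → ℕ) (hk : 3 ≤ k) (ha0 : a 0 = 0)
    (hmono : ∀ i, i < k → a i < a (i+1)) (hgcd : (Finset.Icc 1 k).gcd a = 1) (hkd : k < a k) :
    IsGreatest {z : ℤ | ∃ u ∈ T k a, z = degZ k a u}
      (((((Finset.range (a k)).sup fun i => deg k a (w k a i)) : ℕ) : ℤ) - 2) ∧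
    ((Finset.range (a k)).sup fun i => deg k a (w k a i)) =
      ((Finset.range (a k)).sup fun i => (omega1 k a i + omega2 k a (a k - i)) / a k) :=
  statement_7_general k a ha0 hmono hgcd hkd

end ProjMonomialCurve
end

section
/- Let ε := max{a₁, d − a_{k−1}}. Then: (i) ⌊(F₁ + F₂)/d⌋ ≤ a₁ + (d − a_{k−1}) − 3; (ii) if there exists 0 ≤ i ≤ d−1 with both i and i+1 in A₁, then ⌊(F₁ + F₂)/d⌋ ≤ ε − 2; (iii) if there exists 0 ≤ i ≤ d − ε + 1 with i, i+1, …, i+ε−1 all in A₁, then ⌊(F₁ + F₂)/d⌋ ≤ 0. (All floors are integer floors, allowing negative values.) -/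
namespace ProjMonomialCurve

/-! ### Auxiliary lemmas for `statement_9` -/

private lemma aux_g_add_le {g m : ℕ} (hg : 1 ≤ g) (hm : 1 ≤ m) : g + m ≤ g * m + 1 := by
  obtain ⟨g', rfl⟩ := Nat.exists_eq_add_of_le hg
  obtain ⟨m', rfl⟩ := Nat.exists_eq_add_of_le hm
  have h : (1 + g') * (1 + m') = 1 + m' + g' + g' * m' := by ring
  have h2 := Nat.zero_le (g' * m')
  omega

private lemma solveCong (c M v ρ : ℕ) (hM : 0 < M)
    (hcong : v % Nat.gcd c M = ρ % Nat.gcd c M) :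
    ∃ x : ℕ, x ≤ M / Nat.gcd c M - 1 ∧ (v + x * c) % M = ρ % M := by
  set g := Nat.gcd c M with hgdef
  have hgM : g ∣ M := Nat.gcd_dvd_right c M
  have hgc : g ∣ c := Nat.gcd_dvd_left c M
  have hgpos : 0 < g := Nat.gcd_pos_of_pos_right c hM
  set M' := M / g with hM'def
  have hMM' : M = g * M' := (Nat.mul_div_cancel' hgM).symm
  have hM'pos : 0 < M' := by
    rcases Nat.eq_zero_or_pos M' with h | h
    · rw [h, Nat.mul_zero] at hMM'; omega
    · exact h
  have hdvd : (g : ℤ) ∣ (ρ : ℤ) - (v : ℤ) := (Nat.modEq_iff_dvd).mp hcong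
  obtain ⟨ee, hee⟩ := hdvd
  have hbez := Nat.gcd_eq_gcd_ab c M
  set A := Nat.gcdA c M with hA
  set Bz := Nat.gcdB c M with hBz
  set y₀ : ℤ := A * ee with hy₀
  have hkey : (M : ℤ) ∣ ((v : ℤ) + y₀ * c) - ρ := by
    refine ⟨-(ee * Bz), ?_⟩
    have hAc : (c : ℤ) * A = (g : ℤ) - M * Bz := by linarith [hbez]
    calc ((v : ℤ) + y₀ * c) - ρ = A * ee * c - ((ρ : ℤ) - v) := by ring
      _ = A * ee * c - (g : ℤ) * ee := by rw [hee]
      _ = ee * ((c : ℤ) * A - g) := by ring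
      _ = ee * (-(M * Bz)) := by rw [hAc]; ring
      _ = (M : ℤ) * (-(ee * Bz)) := by ring
  have hM'ne : (M' : ℤ) ≠ 0 := by exact_mod_cast hM'pos.ne'
  have hx0 : 0 ≤ y₀ % (M' : ℤ) := Int.emod_nonneg y₀ hM'ne
  have hxlt : y₀ % (M' : ℤ) < (M' : ℤ) := Int.emod_lt_of_pos y₀ (by exact_mod_cast hM'pos)
  set x : ℕ := (y₀ % (M' : ℤ)).toNat with hxdef
  have hxZ : (x : ℤ) = y₀ % (M' : ℤ) := Int.toNat_of_nonneg hx0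
  have hxle : x ≤ M' - 1 := by
    have : (x : ℤ) < (M' : ℤ) := by rw [hxZ]; exact hxlt
    have : x < M' := by exact_mod_cast this
    omega
  have hdvd2 : (M' : ℤ) ∣ (x : ℤ) - y₀ := by
    rw [hxZ]
    exact ⟨-(y₀ / (M' : ℤ)), by rw [Int.emod_def]; ring⟩
  obtain ⟨t, ht⟩ := hdvd2
  obtain ⟨c', hc'⟩ := hgc
  have hkey2 : (M : ℤ) ∣ ((x : ℤ) - y₀) * c := by
    refine ⟨c' * t, ?_⟩
    rw [ht]
    have : (c : ℤ) = (g : ℤ) * c' := by exact_mod_cast hc'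
    rw [this]
    have hMZ : (M : ℤ) = (g : ℤ) * M' := by exact_mod_cast hMM'
    rw [hMZ]; ring
  have hfinal : (M : ℤ) ∣ ((v : ℤ) + (x : ℤ) * c) - ρ := by
    have h2 : ((v : ℤ) + (x : ℤ) * c) - ρ = (((v : ℤ) + y₀ * c) - ρ) + ((x : ℤ) - y₀) * c := by
      ring
    rw [h2]; exact dvd_add hkey hkey2
  refine ⟨x, hxle, ?_⟩
  have : (v + x * c) ≡ ρ [MOD M] := by
    rw [Nat.modEq_iff_dvd]
    have h3 : (ρ : ℤ) - ((v + x * c : ℕ) : ℤ) = -((((v : ℤ) + (x : ℤ) * c) - ρ)) := by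
      push_cast; ring
    rw [h3]; exact dvd_neg.mpr hfinal
  exact this

private lemma reachMod (N : AddSubmonoid ℕ) (b : ℕ → ℕ) (B : ℕ) :
    ∀ (Ts : Finset ℕ), (∀ j ∈ Ts, b j ∈ N ∧ b j ≤ B) →
    ∀ M ρ : ℕ, 0 < M → Nat.gcd M (Ts.gcd b) = 1 →
    ∃ v, v ∈ N ∧ v % M = ρ % M ∧ v ≤ (M - 1) * B := by
  classical
  intro Ts
  induction Ts using Finset.induction_on with
  | empty =>
      intro _ M ρ hM hg
      rw [Finset.gcd_empty, Nat.gcd_zero_right] at hg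
      refine ⟨0, N.zero_mem, ?_, by simp⟩
      simp [hg, Nat.mod_one]
  | @insert j Ts hjT ih =>
      intro hT M ρ hM hg
      have hTsub : ∀ j' ∈ Ts, b j' ∈ N ∧ b j' ≤ B := fun j' hj' =>
        hT j' (Finset.mem_insert_of_mem hj')
      have hbj := hT j (Finset.mem_insert_self j Ts)
      have hgpos : 0 < Nat.gcd (b j) M := Nat.gcd_pos_of_pos_right _ hM
      have hg' : Nat.gcd (Nat.gcd (b j) M) (Ts.gcd b) = 1 := by
        rw [Finset.gcd_insert] at hg
        rw [Nat.gcd_comm (b j) M, Nat.gcd_assoc]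
        exact hg
      obtain ⟨v', hv'N, hv'mod, hv'le⟩ := ih hTsub (Nat.gcd (b j) M) ρ hgpos hg'
      obtain ⟨x, hxle, hxmod⟩ := solveCong (b j) M v' ρ hM hv'mod
      refine ⟨v' + x * b j, ?_, hxmod, ?_⟩
      · exact N.add_mem hv'N (by simpa [nsmul_eq_mul] using N.nsmul_mem hbj.1 x)
      · set g := Nat.gcd (b j) M with hgdef
        have hgM : g ∣ M := Nat.gcd_dvd_right _ _
        set M' := M / g with hM'def
        have hMM' : M = g * M' := (Nat.mul_div_cancel' hgM).symm
        have hM'pos : 0 < M' := by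
          rcases Nat.eq_zero_or_pos M' with h | h
          · rw [h, Nat.mul_zero] at hMM'; omega
          · exact h
        have h1 : g + M' ≤ g * M' + 1 := aux_g_add_le hgpos hM'pos
        rw [← hMM'] at h1
        have h2 : x * b j ≤ (M' - 1) * B := Nat.mul_le_mul hxle hbj.2
        have h4 : g - 1 + (M' - 1) ≤ M - 1 := by omega
        calc v' + x * b j ≤ (g - 1) * B + (M' - 1) * B := Nat.add_le_add hv'le h2
          _ = (g - 1 + (M' - 1)) * B := (Nat.add_mul _ _ _).symm
          _ ≤ (M - 1) * B := Nat.mul_le_mul_right B h4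

private lemma coverGen (N : AddSubmonoid ℕ) (b : ℕ → ℕ) (Ts : Finset ℕ) (dd c : ℕ)
    (hd : 2 ≤ dd) (hc : 0 < c) (hcd : c ≤ dd - 1) (hcN : c ∈ N) (hdN : dd ∈ N)
    (hT : ∀ j ∈ Ts, b j ∈ N ∧ b j ≤ dd - 1)
    (hg : Nat.gcd (Nat.gcd c dd) (Ts.gcd b) = 1) :
    ∀ n : ℕ, (c - 1) * dd ≤ n → n ∈ N := by
  intro n hn
  have hgpos : 0 < Nat.gcd c dd := Nat.gcd_pos_of_pos_right _ (by omega)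
  obtain ⟨v', hv'N, hv'mod, hv'le⟩ :=
    reachMod N b (dd - 1) Ts hT (Nat.gcd c dd) n hgpos hg
  obtain ⟨x, hxle, hxmod⟩ := solveCong c dd v' n (by omega) hv'mod
  set v := v' + x * c with hvdef
  have hvN : v ∈ N := N.add_mem hv'N (by simpa [nsmul_eq_mul] using N.nsmul_mem hcN x)
  have hgc : Nat.gcd c dd ∣ c := Nat.gcd_dvd_left _ _
  have hgd : Nat.gcd c dd ∣ dd := Nat.gcd_dvd_right _ _
  have hgle : Nat.gcd c dd ≤ c := Nat.le_of_dvd hc hgc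
  set g := Nat.gcd c dd with hgdef
  set D := dd / g with hD
  have hdD : dd = g * D := (Nat.mul_div_cancel' hgd).symm
  have hDpos : 0 < D := by
    rcases Nat.eq_zero_or_pos D with h | h
    · rw [h, Nat.mul_zero] at hdD; omega
    · exact h
  have hvle : v ≤ c * dd - 1 := by
    have hxc : x * c ≤ (D - 1) * c := Nat.mul_le_mul_right c hxle
    have h1 : v ≤ (g - 1) * (dd - 1) + (D - 1) * c := Nat.add_le_add hv'le hxc
    have h2 : (g - 1) * (dd - 1) + (D - 1) * c ≤ c * dd - 1 := by
      have hcd1 : 1 ≤ c * dd := Nat.one_le_iff_ne_zero.mpr (by positivity)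
      zify [hgpos, hDpos, hc, (by omega : 1 ≤ dd), hcd1]
      have hdDZ : (dd : ℤ) = (g : ℤ) * D := by exact_mod_cast hdD
      have hgleZ : (g : ℤ) ≤ c := by exact_mod_cast hgle
      have hg1 : (1 : ℤ) ≤ g := by exact_mod_cast hgpos
      have hD1 : (1 : ℤ) ≤ D := by exact_mod_cast hDpos
      have hc1 : (1 : ℤ) ≤ c := by exact_mod_cast hc
      have hkey : 0 ≤ (D : ℤ) * ((g : ℤ) - 1) * ((c : ℤ) - g) :=
        mul_nonneg (mul_nonneg (by linarith) (by linarith)) (by linarith)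
      nlinarith [hkey, hdDZ]
    omega
  have hvd : v % dd = n % dd := hxmod
  have hvdiv : v / dd ≤ c - 1 := by
    have hlt : v < c * dd := by
      have : 1 ≤ c * dd := Nat.one_le_iff_ne_zero.mpr (by positivity)
      omega
    have : v / dd < c := (Nat.div_lt_iff_lt_mul (by omega : 0 < dd)).mpr hlt
    omega
  have hndiv : c - 1 ≤ n / dd := (Nat.le_div_iff_mul_le (by omega : 0 < dd)).mpr hn
  have hvn : v ≤ n := by
    have h5 := Nat.div_add_mod v dd
    have h6 := Nat.div_add_mod n dd
    have h7 : dd * (v / dd) ≤ dd * (n / dd) :=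
      Nat.mul_le_mul_left dd (le_trans hvdiv hndiv)
    omega
  have hdvd : dd ∣ n - v := (Nat.modEq_iff_dvd' hvn).mp hvd
  obtain ⟨m, hm⟩ := hdvd
  have hneq : n = v + m * dd := by
    rw [Nat.mul_comm m dd]; omega
  rw [hneq]
  exact N.add_mem hvN (by simpa [nsmul_eq_mul] using N.nsmul_mem hdN m)

private lemma coverPair (N : AddSubmonoid ℕ) (p c : ℕ) (hc : 0 < c)
    (hp : p = 0 ∨ p ∈ N) (hp1 : p + 1 ∈ N) (hcN : c ∈ N) :
    ∀ n : ℕ, (c - 1) * p ≤ n → n ∈ N := by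
  intro n hn
  obtain ⟨Δ, hΔ⟩ : ∃ Δ, n = (c - 1) * p + Δ := ⟨n - (c - 1) * p, (Nat.add_sub_cancel' hn).symm⟩
  set t := Δ % c with htdef
  set q := Δ / c with hqdef
  have htlt : t < c := Nat.mod_lt _ hc
  obtain ⟨u, hu⟩ : ∃ u, u + t = c - 1 := ⟨c - 1 - t, by omega⟩
  have hkey : n = u * p + t * (p + 1) + q * c := by
    have h1 : c * q + t = Δ := Nat.div_add_mod Δ c
    calc n = (c - 1) * p + Δ := hΔ
      _ = (u + t) * p + (c * q + t) := by rw [hu, h1]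
      _ = u * p + t * (p + 1) + q * c := by ring
  rw [hkey]
  refine N.add_mem (N.add_mem ?_ ?_) ?_
  · rcases hp with h0 | hpN
    · simpa [h0] using N.zero_mem
    · simpa [nsmul_eq_mul] using N.nsmul_mem hpN u
  · simpa [nsmul_eq_mul] using N.nsmul_mem hp1 t
  · simpa [nsmul_eq_mul] using N.nsmul_mem hcN q

private lemma coverRun (N : AddSubmonoid ℕ) (p L c : ℕ) (hc : 0 < c) (hcL : c ≤ L)
    (hcN : c ∈ N) (hrun : ∀ t, t < L → (p + t = 0 ∨ p + t ∈ N)) :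
    ∀ n : ℕ, p ≤ n → n ∈ N := by
  intro n hn
  obtain ⟨Δ, hΔ⟩ : ∃ Δ, n = p + Δ := ⟨n - p, (Nat.add_sub_cancel' hn).symm⟩
  set t := Δ % c with htdef
  set q := Δ / c with hqdef
  have htlt : t < c := Nat.mod_lt _ hc
  have hkey : n = (p + t) + q * c := by
    have h1 : c * q + t = Δ := Nat.div_add_mod Δ c
    calc n = p + Δ := hΔ
      _ = p + (c * q + t) := by rw [h1]
      _ = (p + t) + q * c := by ring
  rw [hkey]
  refine N.add_mem ?_ (by simpa [nsmul_eq_mul] using N.nsmul_mem hcN q)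
  rcases hrun t (lt_of_lt_of_le htlt hcL) with h0 | hN
  · simpa [h0] using N.zero_mem
  · exact hN

private lemma gapsSup_le (Sx : Set ℕ) (n₀ : ℕ) (h : ∀ n : ℕ, n₀ ≤ n → n ∈ Sx) :
    sSup {z : ℤ | ∀ n ∈ Sx, (n : ℤ) ≠ z} ≤ (n₀ : ℤ) - 1 := by
  apply csSup_le
  · refine ⟨-1, fun n _ => ?_⟩
    have : (0 : ℤ) ≤ (n : ℤ) := Int.natCast_nonneg n
    omega
  · intro z hz
    by_contra hlt
    push_neg at hlt
    have h0 : (0 : ℤ) ≤ (n₀ : ℤ) := Int.natCast_nonneg n₀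
    have hz0 : 0 ≤ z := by omega
    have hzn : (n₀ : ℤ) ≤ z := by omega
    have hn : n₀ ≤ z.toNat := (Int.le_toNat hz0).mpr hzn
    exact hz z.toNat (h _ hn) (Int.toNat_of_nonneg hz0)

private lemma div_le_of_le (X M w dz : ℤ) (hd : 0 < dz) (hw0 : 0 ≤ w) (hwd : w < dz)
    (hX : X ≤ M * dz + w) : X / dz ≤ M := by
  have h1 : X ≤ w + M * dz := by linarith
  calc X / dz ≤ (w + M * dz) / dz := Int.ediv_le_ediv hd h1
    _ = w / dz + M := Int.add_mul_ediv_right w M (ne_of_gt hd)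
    _ = M := by rw [Int.ediv_eq_zero_of_lt hw0 hwd]; ring

/-- `S1 k a` as an additive submonoid of `ℕ`. -/
def N1 (k : ℕ) (a : ℕ → ℕ) : AddSubmonoid ℕ where
  carrier := S1 k a
  zero_mem' := ⟨0, by simp⟩
  add_mem' := by
    rintro p q ⟨x, hx⟩ ⟨y, hy⟩
    exact ⟨fun i => x i + y i, by simp [hx, hy, add_mul, Finset.sum_add_distrib]⟩

/-- `S2 k a` as an additive submonoid of `ℕ`. -/
def N2 (k : ℕ) (a : ℕ → ℕ) : AddSubmonoid ℕ where
  carrier := S2 k a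
  zero_mem' := ⟨0, by simp⟩
  add_mem' := by
    rintro p q ⟨x, hx⟩ ⟨y, hy⟩
    exact ⟨fun i => x i + y i, by simp [hx, hy, add_mul, Finset.sum_add_distrib]⟩

lemma mem_N1_iff (k : ℕ) (a : ℕ → ℕ) (n : ℕ) : n ∈ N1 k a ↔ n ∈ S1 k a := Iff.rfl

lemma mem_N2_iff (k : ℕ) (a : ℕ → ℕ) (n : ℕ) : n ∈ N2 k a ↔ n ∈ S2 k a := Iff.rfl

lemma gen_mem_N1 (k : ℕ) (a : ℕ → ℕ) (j : ℕ) (h1 : 1 ≤ j) (h2 : j ≤ k) : a j ∈ N1 k a := by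
  refine ⟨fun t => if t = j then 1 else 0, ?_⟩
  have hj : j ∈ Finset.Icc 1 k := Finset.mem_Icc.mpr ⟨h1, h2⟩
  have hcong : ∀ i ∈ Finset.Icc 1 k,
      (if i = j then 1 else 0) * a i = if i = j then a i else 0 := by
    intro i _; split <;> simp
  rw [Finset.sum_congr rfl hcong, Finset.sum_ite_eq' (Finset.Icc 1 k) j a, if_pos hj]

lemma gen_mem_N2 (k : ℕ) (a : ℕ → ℕ) (j : ℕ) (hj : j < k) : a k - a j ∈ N2 k a := by
  refine ⟨fun t => if t = j then 1 else 0, ?_⟩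
  have hjm : j ∈ Finset.range k := Finset.mem_range.mpr hj
  have hcong : ∀ i ∈ Finset.range k,
      (if i = j then 1 else 0) * (a k - a i) = if i = j then a k - a i else 0 := by
    intro i _; split <;> simp
  rw [Finset.sum_congr rfl hcong,
    Finset.sum_ite_eq' (Finset.range k) j (fun i => a k - a i), if_pos hjm]

private lemma mono_le_aux (k : ℕ) (a : ℕ → ℕ) (hmono : ∀ i, i < k → a i < a (i+1)) :
    ∀ p q, p ≤ q → q ≤ k → a p ≤ a q := by
  intro p q
  induction q with
  | zero => intro hpq _; have : p = 0 := by omega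
            rw [this]
  | succ q ih =>
      intro hpq hqk
      rcases Nat.eq_or_lt_of_le hpq with h | h
      · rw [h]
      · have h1 : a p ≤ a q := ih (by omega) (by omega)
        have h2 : a q < a (q+1) := hmono q (by omega)
        omega

theorem statement_9 (k : ℕ) (a : ℕ → ℕ) (hk : 3 ≤ k) (ha0 : a 0 = 0)
    (hmono : ∀ i, i < k → a i < a (i+1)) (hgcd : (Finset.Icc 1 k).gcd a = 1) :
    ((F1 k a + F2 k a) / (a k : ℤ) ≤ (a 1 : ℤ) + ((a k : ℤ) - (a (k-1) : ℤ)) - 3) ∧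
    ((∃ i, i ≤ a k - 1 ∧ i ∈ A1set k a ∧ i + 1 ∈ A1set k a) →
      (F1 k a + F2 k a) / (a k : ℤ) ≤ ((max (a 1) (a k - a (k-1)) : ℕ) : ℤ) - 2) ∧
    ((∃ i, i + max (a 1) (a k - a (k-1)) ≤ a k + 1 ∧
        ∀ x, i ≤ x → x < i + max (a 1) (a k - a (k-1)) → x ∈ A1set k a) →
      (F1 k a + F2 k a) / (a k : ℤ) ≤ 0) := by
  classical
  have hk1 : 1 ≤ k := by omega
  have hmle : ∀ p q, p ≤ q → q ≤ k → a p ≤ a q := mono_le_aux k a hmono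
  have hmlt : ∀ p q, p < q → q ≤ k → a p < a q := by
    intro p q hpq hqk
    have hq1 : 1 ≤ q := by omega
    have h1 : a p ≤ a (q - 1) := hmle p (q - 1) (by omega) (by omega)
    have h2 : a (q - 1) < a (q - 1 + 1) := hmono (q - 1) (by omega)
    have h3 : q - 1 + 1 = q := by omega
    rw [h3] at h2; omega
  have ha1pos : 0 < a 1 := by
    have := hmlt 0 1 (by omega) (by omega); omega
  have hak1lt : a (k-1) < a k := hmlt (k-1) k (by omega) (by omega)
  have ha1k1 : a 1 < a (k-1) := hmlt 1 (k-1) (by omega) (by omega)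
  have hak1pos : 0 < a (k-1) := by omega
  have hd3 : 3 ≤ a k := by omega
  have he2pos : 0 < a k - a (k-1) := by omega
  -- gcd facts
  have hg1 : Nat.gcd (Nat.gcd (a 1) (a k)) ((Finset.Icc 1 (k-1)).gcd a) = 1 := by
    have hdvd : Nat.gcd (Nat.gcd (a 1) (a k)) ((Finset.Icc 1 (k-1)).gcd a) ∣
        (Finset.Icc 1 k).gcd a := by
      apply Finset.dvd_gcd
      intro j hj
      rw [Finset.mem_Icc] at hj
      rcases eq_or_ne j k with rfl | hne
      · exact dvd_trans (Nat.gcd_dvd_left _ _) (Nat.gcd_dvd_right _ _)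
      · have hj' : j ∈ Finset.Icc 1 (k-1) := Finset.mem_Icc.mpr ⟨hj.1, by omega⟩
        exact dvd_trans (Nat.gcd_dvd_right _ _) (Finset.gcd_dvd hj')
    rw [hgcd] at hdvd
    exact Nat.dvd_one.mp hdvd
  have hg2 : Nat.gcd (Nat.gcd (a k - a (k-1)) (a k))
      ((Finset.Icc 1 (k-1)).gcd (fun j => a k - a j)) = 1 := by
    have htd : Nat.gcd (Nat.gcd (a k - a (k-1)) (a k))
        ((Finset.Icc 1 (k-1)).gcd (fun j => a k - a j)) ∣ a k :=
      dvd_trans (Nat.gcd_dvd_left _ _) (Nat.gcd_dvd_right _ _)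
    have hdvd : Nat.gcd (Nat.gcd (a k - a (k-1)) (a k))
        ((Finset.Icc 1 (k-1)).gcd (fun j => a k - a j)) ∣ (Finset.Icc 1 k).gcd a := by
      apply Finset.dvd_gcd
      intro j hj
      rw [Finset.mem_Icc] at hj
      rcases eq_or_ne j k with rfl | hne
      · exact htd
      · have hj' : j ∈ Finset.Icc 1 (k-1) := Finset.mem_Icc.mpr ⟨hj.1, by omega⟩
        have h1 : Nat.gcd (Nat.gcd (a k - a (k-1)) (a k))
            ((Finset.Icc 1 (k-1)).gcd (fun j => a k - a j)) ∣ a k - a j :=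
          dvd_trans (Nat.gcd_dvd_right _ _) (Finset.gcd_dvd hj')
        have h2 : a j ≤ a k := hmle j k (by omega) (by omega)
        have h3 : a k - (a k - a j) = a j := Nat.sub_sub_self h2
        exact h3 ▸ Nat.dvd_sub htd h1
    rw [hgcd] at hdvd
    exact Nat.dvd_one.mp hdvd
  -- generator membership / size facts for coverGen
  have hT1 : ∀ j ∈ Finset.Icc 1 (k-1), a j ∈ N1 k a ∧ a j ≤ a k - 1 := by
    intro j hj
    rw [Finset.mem_Icc] at hj
    refine ⟨gen_mem_N1 k a j hj.1 (by omega), ?_⟩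
    have := hmlt j k (by omega) (by omega); omega
  have hT2 : ∀ j ∈ Finset.Icc 1 (k-1),
      (fun j => a k - a j) j ∈ N2 k a ∧ (fun j => a k - a j) j ≤ a k - 1 := by
    intro j hj
    rw [Finset.mem_Icc] at hj
    refine ⟨gen_mem_N2 k a j (by omega), ?_⟩
    have h1 : 0 < a j := by
      have := hmle 1 j (by omega) (by omega); omega
    simp only []
    omega
  have hdN1 : a k ∈ N1 k a := gen_mem_N1 k a k (by omega) le_rfl
  have hdN2 : a k ∈ N2 k a := by
    have h := gen_mem_N2 k a 0 (by omega)
    rwa [ha0, Nat.sub_zero] at h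
  have hc1N1 : a 1 ∈ N1 k a := gen_mem_N1 k a 1 le_rfl (by omega)
  have hc2N2 : a k - a (k-1) ∈ N2 k a := gen_mem_N2 k a (k-1) (by omega)
  -- part (i) bounds
  have hU1 : ∀ n : ℕ, (a 1 - 1) * a k ≤ n → n ∈ S1 k a := by
    intro n hn
    exact coverGen (N1 k a) a (Finset.Icc 1 (k-1)) (a k) (a 1) (by omega) ha1pos
      (by omega) hc1N1 hdN1 hT1 hg1 n hn
  have hU2 : ∀ n : ℕ, (a k - a (k-1) - 1) * a k ≤ n → n ∈ S2 k a := by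
    intro n hn
    exact coverGen (N2 k a) (fun j => a k - a j) (Finset.Icc 1 (k-1)) (a k)
      (a k - a (k-1)) (by omega) he2pos (by omega) hc2N2 hdN2 hT2 hg2 n hn
  have hF1i : F1 k a ≤ (((a 1 - 1) * a k : ℕ) : ℤ) - 1 := gapsSup_le _ _ hU1
  have hF2i : F2 k a ≤ (((a k - a (k-1) - 1) * a k : ℕ) : ℤ) - 1 := gapsSup_le _ _ hU2
  have hcast1 : (((a 1 - 1) * a k : ℕ) : ℤ) = ((a 1 : ℤ) - 1) * (a k : ℤ) := by
    push_cast [ha1pos]; ring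
  have hcast2 : (((a k - a (k-1) - 1) * a k : ℕ) : ℤ)
      = ((a k : ℤ) - (a (k-1) : ℤ) - 1) * (a k : ℤ) := by
    have h1 : a (k-1) ≤ a k := le_of_lt hak1lt
    have h2 : 1 ≤ a k - a (k-1) := he2pos
    push_cast [h1, h2]; ring
  have hdzpos : (0 : ℤ) < (a k : ℤ) := by exact_mod_cast (by omega : 0 < a k)
  refine ⟨?_, ?_, ?_⟩
  · -- part (i)
    rw [hcast1] at hF1i
    rw [hcast2] at hF2i
    have hX : F1 k a + F2 k a ≤
        ((a 1 : ℤ) + ((a k : ℤ) - (a (k-1) : ℤ)) - 3) * (a k : ℤ) + ((a k : ℤ) - 2) := by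
      have := add_le_add hF1i hF2i
      nlinarith [this]
    exact div_le_of_le _ _ _ _ hdzpos (by linarith) (by linarith) hX
  · -- part (ii)
    rintro ⟨i, hile, hiA, hi1A⟩
    have hilt : i < a k := by omega
    -- i = 0 or i ∈ N1
    have hpi : i = 0 ∨ i ∈ N1 k a := by
      rcases Nat.eq_zero_or_pos i with h0 | hpos
      · exact Or.inl h0
      · obtain ⟨j, hjk, hji⟩ := hiA
        have hj1 : 1 ≤ j := by
          rcases Nat.eq_zero_or_pos j with rfl | h
          · rw [ha0] at hji; omega
          · exact h
        exact Or.inr (hji ▸ gen_mem_N1 k a j hj1 hjk)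
    have hpi1 : i + 1 ∈ N1 k a := by
      obtain ⟨j, hjk, hji⟩ := hi1A
      have hj1 : 1 ≤ j := by
        rcases Nat.eq_zero_or_pos j with rfl | h
        · rw [ha0] at hji; omega
        · exact h
      exact hji ▸ gen_mem_N1 k a j hj1 hjk
    have hP1 : ∀ n : ℕ, (a 1 - 1) * i ≤ n → n ∈ S1 k a := by
      intro n hn
      exact coverPair (N1 k a) i (a 1) ha1pos hpi hpi1 hc1N1 n hn
    -- dual pair
    have hq : a k - i - 1 = 0 ∨ a k - i - 1 ∈ N2 k a := by
      obtain ⟨j, hjk, hji⟩ := hi1A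
      rcases eq_or_ne j k with rfl | hne
      · left; omega
      · right
        have hjlt : j < k := by omega
        have heq : a k - i - 1 = a k - a j := by omega
        exact heq ▸ gen_mem_N2 k a j hjlt
    have hq1 : a k - i - 1 + 1 ∈ N2 k a := by
      obtain ⟨j, hjk, hji⟩ := hiA
      have hjlt : j < k := by
        rcases eq_or_ne j k with rfl | hne
        · omega
        · omega
      have heq : a k - i - 1 + 1 = a k - a j := by omega
      exact heq ▸ gen_mem_N2 k a j hjlt
    have hP2 : ∀ n : ℕ, (a k - a (k-1) - 1) * (a k - i - 1) ≤ n → n ∈ S2 k a := by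
      intro n hn
      exact coverPair (N2 k a) (a k - i - 1) (a k - a (k-1)) he2pos hq hq1 hc2N2 n hn
    have hF1p : F1 k a ≤ (((a 1 - 1) * i : ℕ) : ℤ) - 1 := gapsSup_le _ _ hP1
    have hF2p : F2 k a ≤ (((a k - a (k-1) - 1) * (a k - i - 1) : ℕ) : ℤ) - 1 :=
      gapsSup_le _ _ hP2
    have hcastp1 : (((a 1 - 1) * i : ℕ) : ℤ) = ((a 1 : ℤ) - 1) * (i : ℤ) := by
      push_cast [ha1pos]; ring
    have hcastp2 : (((a k - a (k-1) - 1) * (a k - i - 1) : ℕ) : ℤ)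
        = ((a k : ℤ) - (a (k-1) : ℤ) - 1) * ((a k : ℤ) - (i : ℤ) - 1) := by
      have h1 : a (k-1) ≤ a k := le_of_lt hak1lt
      have h2 : 1 ≤ a k - a (k-1) := he2pos
      have h4 : i ≤ a k := by omega
      have h5 : 1 ≤ a k - i := by omega
      push_cast [h1, h2, h4, h5]; ring
    rw [hcastp1] at hF1p
    rw [hcastp2] at hF2p
    set E : ℤ := ((max (a 1) (a k - a (k-1)) : ℕ) : ℤ) with hE
    have hE1 : (a 1 : ℤ) ≤ E := by
      rw [hE]; exact_mod_cast Nat.le_max_left (a 1) (a k - a (k-1))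
    have hE2 : (a k : ℤ) - (a (k-1) : ℤ) ≤ E := by
      have h1 : ((a k - a (k-1) : ℕ) : ℤ) = (a k : ℤ) - (a (k-1) : ℤ) := by
        push_cast [le_of_lt hak1lt]; ring
      rw [hE, ← h1]
      exact_mod_cast Nat.le_max_right (a 1) (a k - a (k-1))
    have hEpos : (1 : ℤ) ≤ E := by
      have : (1 : ℤ) ≤ (a 1 : ℤ) := by exact_mod_cast ha1pos
      linarith
    have hEle : E ≤ (a k : ℤ) - 1 := by
      rw [hE]
      have h1 : max (a 1) (a k - a (k-1)) ≤ a k - 1 := by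
        have := ha1k1; have := hak1lt; have := hak1pos
        apply max_le <;> omega
      have h2 : ((a k - 1 : ℕ) : ℤ) = (a k : ℤ) - 1 := by push_cast [hd3]; omega
      calc ((max (a 1) (a k - a (k-1)) : ℕ) : ℤ) ≤ ((a k - 1 : ℕ) : ℤ) := by exact_mod_cast h1
        _ = (a k : ℤ) - 1 := h2
    have hiZ : (i : ℤ) ≤ (a k : ℤ) - 1 := by
      have : (i : ℤ) + 1 ≤ (a k : ℤ) := by exact_mod_cast (by omega : i + 1 ≤ a k)
      linarith
    have hi0 : (0 : ℤ) ≤ (i : ℤ) := Int.natCast_nonneg i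
    -- combine
    have hsum : F1 k a + F2 k a ≤ (E - 2) * (a k : ℤ) + ((a k : ℤ) - E - 1) := by
      have t1 : ((a 1 : ℤ) - 1) * (i : ℤ) ≤ (E - 1) * (i : ℤ) :=
        mul_le_mul_of_nonneg_right (by linarith) hi0
      have t2 : ((a k : ℤ) - (a (k-1) : ℤ) - 1) * ((a k : ℤ) - (i : ℤ) - 1)
          ≤ (E - 1) * ((a k : ℤ) - (i : ℤ) - 1) :=
        mul_le_mul_of_nonneg_right (by linarith) (by linarith)
      have t3 : (E - 1) * (i : ℤ) + (E - 1) * ((a k : ℤ) - (i : ℤ) - 1)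
          = (E - 1) * ((a k : ℤ) - 1) := by ring
      have t4 : (E - 1) * ((a k : ℤ) - 1) - 2 = (E - 2) * (a k : ℤ) + ((a k : ℤ) - E - 1) := by
        ring
      linarith
    exact div_le_of_le _ _ _ _ hdzpos (by linarith) (by linarith) hsum
  · -- part (iii)
    rintro ⟨i, hiE, hrunA⟩
    set Emax : ℕ := max (a 1) (a k - a (k-1)) with hEmax
    have hE1n : a 1 ≤ Emax := Nat.le_max_left _ _
    have hE2n : a k - a (k-1) ≤ Emax := Nat.le_max_right _ _
    have hEpos : 0 < Emax := by omega
    have hEled : Emax ≤ a k - 1 := by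
      have := ha1k1; have := hak1lt; have := hak1pos
      apply max_le <;> omega
    -- side 1 run
    have hrun1 : ∀ t, t < Emax → (i + t = 0 ∨ i + t ∈ N1 k a) := by
      intro t ht
      obtain ⟨j, hjk, hja⟩ := hrunA (i + t) (by omega) (by omega)
      rcases Nat.eq_zero_or_pos (i + t) with h0 | hpos
      · exact Or.inl h0
      · have hj1 : 1 ≤ j := by
          rcases Nat.eq_zero_or_pos j with rfl | h
          · rw [ha0] at hja; omega
          · exact h
        exact Or.inr (hja ▸ gen_mem_N1 k a j hj1 hjk)
    have hR1 : ∀ n : ℕ, i ≤ n → n ∈ S1 k a := by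
      intro n hn
      exact coverRun (N1 k a) i Emax (a 1) ha1pos hE1n hc1N1 hrun1 n hn
    -- side 2 run
    have hrun2 : ∀ t, t < Emax → (a k + 1 - (i + Emax) + t = 0 ∨
        a k + 1 - (i + Emax) + t ∈ N2 k a) := by
      intro t ht
      have hx1 : i ≤ i + Emax - 1 - t := by omega
      have hx2 : i + Emax - 1 - t < i + Emax := by omega
      obtain ⟨j, hjk, hja⟩ := hrunA (i + Emax - 1 - t) hx1 hx2
      have hsum : (i + Emax - 1 - t) + (a k + 1 - (i + Emax) + t) = a k := by omega
      rcases eq_or_ne j k with rfl | hne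
      · left; omega
      · right
        have hjlt : j < k := by omega
        have heq : a k + 1 - (i + Emax) + t = a k - a j := by omega
        exact heq ▸ gen_mem_N2 k a j hjlt
    have hR2 : ∀ n : ℕ, a k + 1 - (i + Emax) ≤ n → n ∈ S2 k a := by
      intro n hn
      exact coverRun (N2 k a) (a k + 1 - (i + Emax)) Emax (a k - a (k-1)) he2pos hE2n
        hc2N2 hrun2 n hn
    have hF1r : F1 k a ≤ ((i : ℕ) : ℤ) - 1 := gapsSup_le _ _ hR1
    have hF2r : F2 k a ≤ ((a k + 1 - (i + Emax) : ℕ) : ℤ) - 1 := gapsSup_le _ _ hR2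
    have hcastr : ((a k + 1 - (i + Emax) : ℕ) : ℤ)
        = (a k : ℤ) + 1 - (i : ℤ) - (Emax : ℤ) := by
      push_cast [hiE]; ring
    rw [hcastr] at hF2r
    have hEposZ : (1 : ℤ) ≤ (Emax : ℤ) := by exact_mod_cast hEpos
    have hEledZ : (Emax : ℤ) ≤ (a k : ℤ) - 1 := by
      have h2 : ((a k - 1 : ℕ) : ℤ) = (a k : ℤ) - 1 := by push_cast [hd3]; omega
      calc (Emax : ℤ) ≤ ((a k - 1 : ℕ) : ℤ) := by exact_mod_cast hEled
        _ = (a k : ℤ) - 1 := h2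
    have hsum : F1 k a + F2 k a ≤ (0 : ℤ) * (a k : ℤ) + ((a k : ℤ) - (Emax : ℤ) - 1) := by
      linarith
    exact div_le_of_le _ _ _ _ hdzpos (by linarith) (by linarith) hsum


end ProjMonomialCurve
end

section
/- Assume S′∖S ≠ ∅. Then for every i ∈ 𝕀 one has δ₂(w_i) ≥ deg(w_i) + 1, and for every integer n₁ with 0 ≤ n₁ ≤ δ₂(w_i) − deg(w_i) − 1 one has δ₁(ω₁(i) + n₁d) ≥ deg(w_i) + n₁ + 1. Moreover, S′∖S = 𝓛′, where 𝓛′ := {w_i + (n₁d, n₂d) : i ∈ 𝕀, 0 ≤ n₁ ≤ δ₂(w_i) − deg(w_i) − 1, 0 ≤ n₂ ≤ δ₁(ω₁(i)+n₁d) − deg(w_i) − n₁ − 1}. Consequently, max{deg(u) : u ∈ S′∖S} = max{deg(u) : u ∈ 𝓛}, where 𝓛 ⊆ 𝓛′ consists of the elements with n₂ = δ₁(ω₁(i)+n₁d) − deg(w_i) − n₁ − 1, and the cardinality of S′∖S equals the cardinality of 𝓛′. -/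
/-!
A point `u ∈ ℕ²` lies in `S` iff `d ∣ u₁ + u₂`, `u₁ ∈ S₍₁₎` and `δ₁(u₁) ≤ deg u`: a representation
of `u₁` of length `m ≤ deg u` is padded with `deg u - m` copies of `e₀`. Symmetrically (padding
with `e_d`) the same holds with `u₂`, `S₍₂₎`, `δ₂`. Taking `p = δ₁(u₁) + δ₂(u₂)` shows that `S'` is
`{u | d ∣ u₁ + u₂, u₁ ∈ S₍₁₎, u₂ ∈ S₍₂₎}`, inside which `S' ∖ S` is cut out by either inequality
`deg u < δ₁(u₁)` or `deg u < δ₂(u₂)`. Every `u ∈ S'` is `w_i + (n₁d, n₂d)` with `i = u₁ mod d`, and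
adding `d` raises `δ₁`, `δ₂` by at most one; comparing both inequalities at `u`, at `w_i` and at
`w_i + (n₁d, 0)` describes `S' ∖ S`. The excluded indices `i = 0, a_j` are those with
`δ₁(ω₁ i) ≤ 1`, for which `w_i ∈ S`. The maximal degrees agree since each of the two degree sets
is dominated by the other.
-/

namespace ProjMonomialCurve

section Generic

variable {ι : Type*} {s : Finset ι} {f : ι → ℕ} {n : ℕ}

/- `S₍₁₎, δ₁, ω₁` and `S₍₂₎, δ₂, ω₂` are definitionally the instances `(Icc 1 k, a)` and
`(range k, fun i => a k - a i)` of the following three notions. -/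
def genSemigroup (s : Finset ι) (f : ι → ℕ) : Set ℕ :=
  {n | ∃ x : ι → ℕ, n = ∑ i ∈ s, x i * f i}

noncomputable def minLength (s : Finset ι) (f : ι → ℕ) (n : ℕ) : ℕ :=
  sInf {m | ∃ x : ι → ℕ, n = ∑ i ∈ s, x i * f i ∧ m = ∑ i ∈ s, x i}

noncomputable def apery (s : Finset ι) (f : ι → ℕ) (d r : ℕ) : ℕ :=
  sInf {n | n ∈ genSemigroup s f ∧ n % d = r % d}

lemma zero_mem_genSemigroup : 0 ∈ genSemigroup s f := ⟨0, by simp⟩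

lemma minLength_le (x : ι → ℕ) (h : n = ∑ i ∈ s, x i * f i) :
    minLength s f n ≤ ∑ i ∈ s, x i :=
  Nat.sInf_le ⟨x, h, rfl⟩

lemma exists_eq_sum_minLength_eq (h : n ∈ genSemigroup s f) :
    ∃ x : ι → ℕ, n = ∑ i ∈ s, x i * f i ∧ minLength s f n = ∑ i ∈ s, x i :=
  let ⟨x, hx⟩ := h
  Nat.sInf_mem (⟨_, x, hx, rfl⟩ :
    {m | ∃ x : ι → ℕ, n = ∑ i ∈ s, x i * f i ∧ m = ∑ i ∈ s, x i}.Nonempty)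

lemma minLength_zero : minLength s f 0 = 0 :=
  Nat.eq_zero_of_le_zero (by simpa using minLength_le (s := s) (f := f) 0 (by simp))

lemma add_mul_mem_and_minLength_le [DecidableEq ι] {j : ι} (hj : j ∈ s)
    (h : n ∈ genSemigroup s f) (p : ℕ) :
    n + p * f j ∈ genSemigroup s f ∧ minLength s f (n + p * f j) ≤ minLength s f n + p := by
  obtain ⟨x, rfl, hlen⟩ := exists_eq_sum_minLength_eq h
  have hsum : ∑ i ∈ s, x i * f i + p * f j = ∑ i ∈ s, (x i + if i = j then p else 0) * f i := by
    simp [add_mul, Finset.sum_add_distrib, ite_mul, hj]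
  refine ⟨⟨_, hsum⟩, (minLength_le _ hsum).trans_eq ?_⟩
  simp [Finset.sum_add_distrib, hj, hlen]

lemma apply_mem_and_minLength_le_one [DecidableEq ι] {j : ι} (hj : j ∈ s) :
    f j ∈ genSemigroup s f ∧ minLength s f (f j) ≤ 1 := by
  simpa [minLength_zero] using add_mul_mem_and_minLength_le hj zero_mem_genSemigroup 1

/-- A generator equal to `0` turns "a representation of length at most `m`" into
"a representation of length exactly `m`". -/
lemma exists_sum_insert_iff [DecidableEq ι] {j : ι} (hj : j ∉ s) (hf : f j = 0) (m : ℕ) :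
    (∃ x : ι → ℕ, n = ∑ i ∈ insert j s, x i * f i ∧ ∑ i ∈ insert j s, x i = m) ↔
      n ∈ genSemigroup s f ∧ minLength s f n ≤ m := by
  simp only [Finset.sum_insert hj, hf, mul_zero, zero_add]
  constructor
  · rintro ⟨x, hn, rfl⟩
    exact ⟨⟨x, hn⟩, (minLength_le x hn).trans (Nat.le_add_left _ _)⟩
  · rintro ⟨h, hle⟩
    obtain ⟨x, hn, hlen⟩ := exists_eq_sum_minLength_eq h
    refine ⟨Function.update x j (m - minLength s f n), ?_, ?_⟩
    · rw [hn]
      refine Finset.sum_congr rfl fun i hi => ?_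
      rw [Function.update_of_ne (ne_of_mem_of_not_mem hi hj)]
    · rw [Finset.sum_update_of_notMem hj, Function.update_self]
      omega

lemma apery_le {r : ℕ} {d : ℕ} (h : n ∈ genSemigroup s f) (hr : n % d = r % d) :
    apery s f d r ≤ n :=
  Nat.sInf_le ⟨h, hr⟩

lemma apery_mem_of_mem {r : ℕ} {d : ℕ} (h : n ∈ genSemigroup s f) (hr : n % d = r % d) :
    apery s f d r ∈ genSemigroup s f ∧ apery s f d r % d = r % d :=
  Nat.sInf_mem (⟨n, h, hr⟩ : {n | n ∈ genSemigroup s f ∧ n % d = r % d}.Nonempty)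

lemma apery_congr {d r r' : ℕ} (h : r % d = r' % d) : apery s f d r = apery s f d r' := by
  simp only [apery, h]

lemma apery_eq_self {d : ℕ} (h : n ∈ genSemigroup s f) (hn : n < d) : apery s f d n = n := by
  have hmod : apery s f d n % d = n := by
    rw [(apery_mem_of_mem h rfl).2, Nat.mod_eq_of_lt hn]
  exact le_antisymm (apery_le h rfl) (hmod.symm.trans_le (Nat.mod_le _ _))

lemma exists_eq_apery_add_mul {d : ℕ} (h : n ∈ genSemigroup s f) :
    ∃ t, n = apery s f d n + t * d := by
  have hle := apery_le (d := d) h rfl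
  obtain ⟨t, ht⟩ := (Nat.modEq_iff_dvd' hle).mp (apery_mem_of_mem (d := d) h rfl).2
  exact ⟨t, by rw [mul_comm, ← ht]; omega⟩

lemma exists_mem_genSemigroup_mod_eq {d : ℕ} (hd : 0 < d) (hg : s.gcd f = 1) (r : ℕ) :
    ∃ n ∈ genSemigroup s f, n % d = r % d := by
  have : NeZero d := ⟨hd.ne'⟩
  obtain ⟨c, hc⟩ := Finset.gcd_eq_sum_mul s (fun i => (f i : ℤ))
  have hone : s.gcd (fun i => (f i : ℤ)) = 1 := by
    have habs : (s.gcd fun i => (f i : ℤ)).natAbs ∣ s.gcd f :=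
      Finset.dvd_gcd fun i hi => Int.natAbs_dvd_natAbs.mpr (Finset.gcd_dvd hi)
    rw [hg, Nat.dvd_one] at habs
    have := Finset.Int.finsetGcd_nonneg (s := s) (f := fun i => (f i : ℤ))
    omega
  refine ⟨∑ i ∈ s, (r * c i : ZMod d).val * f i, ⟨_, rfl⟩, ?_⟩
  rw [← ZMod.natCast_eq_natCast_iff']
  have hc' := congrArg (Int.cast : ℤ → ZMod d) hc
  push_cast [hone, ZMod.natCast_zmod_val] at hc' ⊢
  calc ∑ i ∈ s, (r : ZMod d) * c i * f i = r * ∑ i ∈ s, (f i : ZMod d) * c i := by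
        rw [Finset.mul_sum]; exact Finset.sum_congr rfl fun i _ => by ring
    _ = r := by rw [← hc', mul_one]

end Generic

section Curve

variable {k : ℕ} {a : ℕ → ℕ}

lemma apply_lt_apply (hmono : ∀ i, i < k → a i < a (i+1)) {i j : ℕ} (hij : i < j)
    (hjk : j ≤ k) : a i < a j := by
  induction j, hij using Nat.le_induction with
  | base => exact hmono i (by omega)
  | succ j hij ih => exact (ih (by omega)).trans (hmono j (by omega))

lemma apply_le_d (hmono : ∀ i, i < k → a i < a (i+1)) {i : ℕ} (hik : i ≤ k) :
    a i ≤ a k := by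
  rcases hik.lt_or_eq with h | rfl
  · exact (apply_lt_apply hmono h le_rfl).le
  · exact le_rfl

lemma d_pos (hk : 0 < k) (ha0 : a 0 = 0) (hmono : ∀ i, i < k → a i < a (i+1)) : 0 < a k :=
  ha0 ▸ apply_lt_apply hmono hk le_rfl

lemma eq_mul_iff_dvd_and_eq_div {n m d : ℕ} (hd : 0 < d) : n = m * d ↔ d ∣ n ∧ m = n / d := by
  constructor
  · rintro rfl
    exact ⟨dvd_mul_left d m, (Nat.mul_div_cancel m hd).symm⟩
  · rintro ⟨hdvd, rfl⟩
    exact (Nat.div_mul_cancel hdvd).symm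

lemma fst_sum_smul_e (x : ℕ → ℕ) :
    (∑ i ∈ Finset.range (k+1), x i • e k a (a i)).1 = ∑ i ∈ Finset.range (k+1), x i * a i := by
  simp [Prod.fst_sum, e]

lemma snd_sum_smul_e (x : ℕ → ℕ) :
    (∑ i ∈ Finset.range (k+1), x i • e k a (a i)).2 =
      ∑ i ∈ Finset.range (k+1), x i * (a k - a i) := by
  simp [Prod.snd_sum, e]

lemma fst_add_snd_sum_smul_e (hmono : ∀ i, i < k → a i < a (i+1)) (x : ℕ → ℕ) :
    (∑ i ∈ Finset.range (k+1), x i • e k a (a i)).1 +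
      (∑ i ∈ Finset.range (k+1), x i • e k a (a i)).2 =
      (∑ i ∈ Finset.range (k+1), x i) * a k := by
  rw [fst_sum_smul_e, snd_sum_smul_e, ← Finset.sum_add_distrib, Finset.sum_mul]
  refine Finset.sum_congr rfl fun i hi => ?_
  rw [← mul_add, Nat.add_sub_cancel' (apply_le_d hmono (by simpa [Nat.lt_succ_iff] using hi))]

lemma mem_S_iff_exists_fst (hmono : ∀ i, i < k → a i < a (i+1)) {u : ℕ × ℕ} :
    u ∈ S k a ↔ ∃ x : ℕ → ℕ, u.1 = ∑ i ∈ Finset.range (k+1), x i * a i ∧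
      u.1 + u.2 = (∑ i ∈ Finset.range (k+1), x i) * a k := by
  constructor
  · rintro ⟨x, rfl⟩
    exact ⟨x, fst_sum_smul_e x, fst_add_snd_sum_smul_e hmono x⟩
  · rintro ⟨x, h1, h2⟩
    have hfst := fst_sum_smul_e (k := k) (a := a) x
    have hsum := fst_add_snd_sum_smul_e hmono x
    exact ⟨x, Prod.ext (by rw [hfst, h1]) (by omega)⟩

lemma mem_S_iff_exists_snd (hmono : ∀ i, i < k → a i < a (i+1)) {u : ℕ × ℕ} :
    u ∈ S k a ↔ ∃ x : ℕ → ℕ, u.2 = ∑ i ∈ Finset.range (k+1), x i * (a k - a i) ∧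
      u.1 + u.2 = (∑ i ∈ Finset.range (k+1), x i) * a k := by
  constructor
  · rintro ⟨x, rfl⟩
    exact ⟨x, snd_sum_smul_e x, fst_add_snd_sum_smul_e hmono x⟩
  · rintro ⟨x, h2, h⟩
    have hsnd := snd_sum_smul_e (k := k) (a := a) x
    have hsum := fst_add_snd_sum_smul_e hmono x
    exact ⟨x, Prod.ext (by omega) (by rw [hsnd, h2])⟩

lemma mem_S_iff_delta1 (hk : 0 < k) (ha0 : a 0 = 0) (hmono : ∀ i, i < k → a i < a (i+1))
    {u : ℕ × ℕ} :
    u ∈ S k a ↔ a k ∣ u.1 + u.2 ∧ u.1 ∈ S1 k a ∧ delta1 k a u.1 ≤ deg k a u := by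
  have hd := d_pos hk ha0 hmono
  have hrange : Finset.range (k+1) = insert 0 (Finset.Icc 1 k) := by
    ext i; simp only [Finset.mem_range, Finset.mem_insert, Finset.mem_Icc]; omega
  have key := exists_sum_insert_iff (s := Finset.Icc 1 k) (f := a) (n := u.1) (j := 0)
    (by simp) ha0 (deg k a u)
  rw [mem_S_iff_exists_fst hmono, hrange]
  constructor
  · rintro ⟨x, h1, h2⟩
    obtain ⟨hdvd, hdeg⟩ := (eq_mul_iff_dvd_and_eq_div hd).1 h2
    exact ⟨hdvd, key.1 ⟨x, h1, hdeg⟩⟩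
  · rintro ⟨hdvd, hmem⟩
    obtain ⟨x, h1, hdeg⟩ := key.2 hmem
    exact ⟨x, h1, (eq_mul_iff_dvd_and_eq_div hd).2 ⟨hdvd, hdeg⟩⟩

lemma mem_S_iff_delta2 (hk : 0 < k) (ha0 : a 0 = 0) (hmono : ∀ i, i < k → a i < a (i+1))
    {u : ℕ × ℕ} :
    u ∈ S k a ↔ a k ∣ u.1 + u.2 ∧ u.2 ∈ S2 k a ∧ delta2 k a u.2 ≤ deg k a u := by
  have hd := d_pos hk ha0 hmono
  have key := exists_sum_insert_iff (s := Finset.range k) (f := fun i => a k - a i) (n := u.2)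
    (j := k) Finset.notMem_range_self (Nat.sub_self _) (deg k a u)
  rw [mem_S_iff_exists_snd hmono, Finset.range_add_one]
  constructor
  · rintro ⟨x, h1, h2⟩
    obtain ⟨hdvd, hdeg⟩ := (eq_mul_iff_dvd_and_eq_div hd).1 h2
    exact ⟨hdvd, key.1 ⟨x, h1, hdeg⟩⟩
  · rintro ⟨hdvd, hmem⟩
    obtain ⟨x, h1, hdeg⟩ := key.2 hmem
    exact ⟨x, h1, (eq_mul_iff_dvd_and_eq_div hd).2 ⟨hdvd, hdeg⟩⟩

lemma deg_add_mul (hd : 0 < a k) (u : ℕ × ℕ) (n1 n2 : ℕ) :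
    deg k a (u + (n1 * a k, n2 * a k)) = deg k a u + n1 + n2 := by
  simp only [deg, Prod.fst_add, Prod.snd_add]
  rw [show u.1 + n1 * a k + (u.2 + n2 * a k) = u.1 + u.2 + (n1 + n2) * a k by ring,
    Nat.add_mul_div_right _ _ hd, add_assoc]

lemma dvd_add_mul_iff {d : ℕ} (u : ℕ × ℕ) (n1 n2 : ℕ) :
    d ∣ (u + (n1 * d, n2 * d)).1 + (u + (n1 * d, n2 * d)).2 ↔ d ∣ u.1 + u.2 := by
  simp only [Prod.fst_add, Prod.snd_add]
  rw [show u.1 + n1 * d + (u.2 + n2 * d) = u.1 + u.2 + (n1 + n2) * d by ring]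
  exact Nat.dvd_add_left (dvd_mul_left d _)

lemma add_mul_mem_S1_and_delta1_le (hk : 0 < k) {n : ℕ} (h : n ∈ S1 k a) (p : ℕ) :
    n + p * a k ∈ S1 k a ∧ delta1 k a (n + p * a k) ≤ delta1 k a n + p :=
  add_mul_mem_and_minLength_le (Finset.right_mem_Icc.2 hk) h p

lemma add_mul_mem_S2_and_delta2_le (hk : 0 < k) (ha0 : a 0 = 0) {n : ℕ} (h : n ∈ S2 k a) (p : ℕ) :
    n + p * a k ∈ S2 k a ∧ delta2 k a (n + p * a k) ≤ delta2 k a n + p := by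
  have h' := add_mul_mem_and_minLength_le (f := fun i => a k - a i) (Finset.mem_range.2 hk) h p
  simp only [ha0, Nat.sub_zero] at h'
  exact h'

lemma mem_S'_iff (hk : 0 < k) (ha0 : a 0 = 0) (hmono : ∀ i, i < k → a i < a (i+1))
    {u : ℕ × ℕ} :
    u ∈ S' k a ↔ a k ∣ u.1 + u.2 ∧ u.1 ∈ S1 k a ∧ u.2 ∈ S2 k a := by
  have hd := d_pos hk ha0 hmono
  have he0 : ∀ p : ℕ, u + p • e k a 0 = u + (0 * a k, p * a k) := fun p => by simp [e]
  have hed : ∀ p : ℕ, u + p • e k a (a k) = u + (p * a k, 0 * a k) := fun p => by simp [e]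
  constructor
  · rintro ⟨p, hp0, hpd⟩
    rw [he0, mem_S_iff_delta1 hk ha0 hmono, dvd_add_mul_iff] at hp0
    rw [hed, mem_S_iff_delta2 hk ha0 hmono] at hpd
    exact ⟨hp0.1, by simpa using hp0.2.1, by simpa using hpd.2.1⟩
  · rintro ⟨hdvd, h1, h2⟩
    refine ⟨delta1 k a u.1 + delta2 k a u.2, ?_, ?_⟩
    · rw [he0, mem_S_iff_delta1 hk ha0 hmono, dvd_add_mul_iff, deg_add_mul hd]
      refine ⟨hdvd, by simpa using h1, ?_⟩
      simp only [Prod.fst_add, zero_mul, add_zero]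
      omega
    · rw [hed, mem_S_iff_delta2 hk ha0 hmono, dvd_add_mul_iff, deg_add_mul hd]
      refine ⟨hdvd, by simpa using h2, ?_⟩
      simp only [Prod.snd_add, zero_mul, add_zero]
      omega

lemma gcd_range_sub_eq_one (hk : 0 < k) (ha0 : a 0 = 0)
    (hmono : ∀ i, i < k → a i < a (i+1)) (hgcd : (Finset.Icc 1 k).gcd a = 1) :
    (Finset.range k).gcd (fun i => a k - a i) = 1 := by
  set g := (Finset.range k).gcd (fun i => a k - a i)
  have hgd : g ∣ a k := by
    simpa [ha0] using Finset.gcd_dvd (f := fun i => a k - a i) (Finset.mem_range.2 hk)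
  refine Nat.dvd_one.1 (hgcd ▸ Finset.dvd_gcd fun j hj => ?_)
  have hjk := (Finset.mem_Icc.1 hj).2
  have hgdj : g ∣ a k - a j := by
    rcases hjk.lt_or_eq with h | rfl
    · exact Finset.gcd_dvd (Finset.mem_range.2 h)
    · simp
  simpa [Nat.sub_sub_self (apply_le_d hmono hjk)] using Nat.dvd_sub hgd hgdj

lemma omega1_spec (hk : 0 < k) (ha0 : a 0 = 0) (hmono : ∀ i, i < k → a i < a (i+1))
    (hgcd : (Finset.Icc 1 k).gcd a = 1) (r : ℕ) :
    omega1 k a r ∈ S1 k a ∧ omega1 k a r % a k = r % a k := by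
  obtain ⟨n, hn, hr⟩ := exists_mem_genSemigroup_mod_eq (d_pos hk ha0 hmono) hgcd r
  exact apery_mem_of_mem hn hr

lemma omega2_spec (hk : 0 < k) (ha0 : a 0 = 0) (hmono : ∀ i, i < k → a i < a (i+1))
    (hgcd : (Finset.Icc 1 k).gcd a = 1) (r : ℕ) :
    omega2 k a r ∈ S2 k a ∧ omega2 k a r % a k = r % a k := by
  obtain ⟨n, hn, hr⟩ := exists_mem_genSemigroup_mod_eq (d_pos hk ha0 hmono)
    (gcd_range_sub_eq_one hk ha0 hmono hgcd) r
  exact apery_mem_of_mem hn hr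

lemma fst_w (i : ℕ) : (w k a i).1 = omega1 k a i := rfl

lemma snd_w (i : ℕ) : (w k a i).2 = omega2 k a (a k - i) := rfl

lemma dvd_fst_add_snd_w (hk : 0 < k) (ha0 : a 0 = 0) (hmono : ∀ i, i < k → a i < a (i+1))
    (hgcd : (Finset.Icc 1 k).gcd a = 1) {i : ℕ} (hi : i ≤ a k) :
    a k ∣ (w k a i).1 + (w k a i).2 := by
  apply Nat.dvd_of_mod_eq_zero
  rw [fst_w, snd_w, Nat.add_mod, (omega1_spec hk ha0 hmono hgcd i).2,
    (omega2_spec hk ha0 hmono hgcd _).2, ← Nat.add_mod, Nat.add_sub_cancel' hi, Nat.mod_self]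

lemma mem_S'_iff_exists_w (hk : 0 < k) (ha0 : a 0 = 0) (hmono : ∀ i, i < k → a i < a (i+1))
    (hgcd : (Finset.Icc 1 k).gcd a = 1) {u : ℕ × ℕ} :
    u ∈ S' k a ↔ ∃ i < a k, ∃ n1 n2 : ℕ, u = w k a i + (n1 * a k, n2 * a k) := by
  have hd := d_pos hk ha0 hmono
  rw [mem_S'_iff hk ha0 hmono]
  constructor
  · rintro ⟨hdvd, h1, h2⟩
    have hi : u.1 % a k < a k := Nat.mod_lt _ hd
    have hres : u.2 % a k = (a k - u.1 % a k) % a k := by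
      refine Nat.ModEq.add_right_cancel' (u.1 % a k) ?_
      calc u.2 + u.1 % a k ≡ u.2 + u.1 [MOD a k] := Nat.ModEq.add_left _ (Nat.mod_modEq _ _)
        _ ≡ 0 [MOD a k] := Nat.modEq_zero_iff_dvd.2 (add_comm u.1 u.2 ▸ hdvd)
        _ ≡ a k - u.1 % a k + u.1 % a k [MOD a k] := by
          rw [Nat.sub_add_cancel hi.le]; exact (Nat.modEq_zero_iff_dvd.2 dvd_rfl).symm
    obtain ⟨n1, hn1⟩ := exists_eq_apery_add_mul (d := a k) h1
    obtain ⟨n2, hn2⟩ := exists_eq_apery_add_mul (d := a k) h2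
    refine ⟨u.1 % a k, hi, n1, n2, Prod.ext ?_ ?_⟩
    · exact hn1.trans (congrArg (· + n1 * a k) (apery_congr (Nat.mod_mod _ _).symm))
    · exact hn2.trans (congrArg (· + n2 * a k) (apery_congr hres))
  · rintro ⟨i, hi, n1, n2, rfl⟩
    refine ⟨(dvd_add_mul_iff _ _ _).2 (dvd_fst_add_snd_w hk ha0 hmono hgcd hi.le),
      (add_mul_mem_S1_and_delta1_le hk (omega1_spec hk ha0 hmono hgcd i).1 n1).1,
      (add_mul_mem_S2_and_delta2_le hk ha0 (omega2_spec hk ha0 hmono hgcd _).1 n2).1⟩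

lemma delta1_zero : delta1 k a 0 = 0 := minLength_zero

lemma mem_S'_diff_S_iff_delta1 (hk : 0 < k) (ha0 : a 0 = 0)
    (hmono : ∀ i, i < k → a i < a (i+1)) {u : ℕ × ℕ} :
    u ∈ S' k a \ S k a ↔ u ∈ S' k a ∧ deg k a u < delta1 k a u.1 := by
  refine and_congr_right fun hu => ?_
  obtain ⟨hdvd, h1, -⟩ := (mem_S'_iff hk ha0 hmono).1 hu
  simp [mem_S_iff_delta1 hk ha0 hmono, hdvd, h1]

lemma mem_S'_diff_S_iff_delta2 (hk : 0 < k) (ha0 : a 0 = 0)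
    (hmono : ∀ i, i < k → a i < a (i+1)) {u : ℕ × ℕ} :
    u ∈ S' k a \ S k a ↔ u ∈ S' k a ∧ deg k a u < delta2 k a u.2 := by
  refine and_congr_right fun hu => ?_
  obtain ⟨hdvd, -, h2⟩ := (mem_S'_iff hk ha0 hmono).1 hu
  simp [mem_S_iff_delta2 hk ha0 hmono, hdvd, h2]

lemma delta1_omega1_le_deg_w (hk : 0 < k) (ha0 : a 0 = 0) (hmono : ∀ i, i < k → a i < a (i+1))
    (hgcd : (Finset.Icc 1 k).gcd a = 1) {i : ℕ} (hi : i ≤ a k)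
    (h : delta1 k a (omega1 k a i) ≤ 1) : delta1 k a (omega1 k a i) ≤ deg k a (w k a i) := by
  by_contra! hlt
  -- `deg (w i) = 0` and `d ∣ w₁ + w₂` force `w i = 0`, but `δ₁ 0 = 0`.
  have hdeg : (w k a i).1 + (w k a i).2 < a k := by
    have : deg k a (w k a i) = 0 := by omega
    simpa [deg, Nat.div_eq_zero_iff, (d_pos hk ha0 hmono).ne'] using this
  have hw := Nat.eq_zero_of_dvd_of_lt (dvd_fst_add_snd_w hk ha0 hmono hgcd hi) hdeg
  rw [show omega1 k a i = 0 by rw [← fst_w]; omega, delta1_zero] at hlt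
  omega

lemma mem_II_iff (hk : 0 < k) (ha0 : a 0 = 0) (hmono : ∀ i, i < k → a i < a (i+1))
    (hgcd : (Finset.Icc 1 k).gcd a = 1) {i : ℕ} :
    i ∈ II k a ↔ i < a k ∧ deg k a (w k a i) < delta1 k a (omega1 k a i) := by
  have hd := d_pos hk ha0 hmono
  constructor
  · rintro ⟨hi1, hid, -, hlt⟩
    exact ⟨by omega, hlt⟩
  · rintro ⟨hid, hlt⟩
    have hfree : ∀ n ∈ S1 k a, n < a k → delta1 k a n ≤ 1 → i ≠ n := by
      rintro n hn hnd hn1 rfl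
      have hw : omega1 k a i = i := apery_eq_self hn hnd
      have := delta1_omega1_le_deg_w hk ha0 hmono hgcd hid.le (by rwa [hw])
      omega
    refine ⟨?_, by omega, fun j hj1 hjk => ?_, hlt⟩
    · have := hfree 0 zero_mem_genSemigroup hd (by rw [delta1_zero]; exact zero_le_one)
      omega
    · obtain ⟨hmem, hlen⟩ := apply_mem_and_minLength_le_one (s := Finset.Icc 1 k) (f := a)
        (Finset.mem_Icc.2 ⟨hj1, by omega⟩)
      exact hfree _ hmem (apply_lt_apply hmono (by omega) le_rfl) hlen

lemma deg_w_add_one_le_delta2 (hk : 0 < k) (ha0 : a 0 = 0)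
    (hmono : ∀ i, i < k → a i < a (i+1)) (hgcd : (Finset.Icc 1 k).gcd a = 1) {i : ℕ}
    (hi : i ∈ II k a) : deg k a (w k a i) + 1 ≤ delta2 k a (w k a i).2 := by
  obtain ⟨hid, hlt⟩ := (mem_II_iff hk ha0 hmono hgcd).1 hi
  have hw : w k a i ∈ S' k a :=
    (mem_S'_iff_exists_w hk ha0 hmono hgcd).2 ⟨i, hid, 0, 0, by simp⟩
  have := (mem_S'_diff_S_iff_delta2 hk ha0 hmono).1
    ((mem_S'_diff_S_iff_delta1 hk ha0 hmono).2 ⟨hw, hlt⟩)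
  omega

lemma deg_w_add_le_delta1 (hk : 0 < k) (ha0 : a 0 = 0)
    (hmono : ∀ i, i < k → a i < a (i+1)) (hgcd : (Finset.Icc 1 k).gcd a = 1) {i : ℕ}
    (hi : i ∈ II k a) {n1 : ℕ} (hn1 : n1 + deg k a (w k a i) + 1 ≤ delta2 k a (w k a i).2) :
    deg k a (w k a i) + n1 + 1 ≤ delta1 k a (omega1 k a i + n1 * a k) := by
  have hd := d_pos hk ha0 hmono
  have hu : w k a i + (n1 * a k, 0 * a k) ∈ S' k a :=
    (mem_S'_iff_exists_w hk ha0 hmono hgcd).2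
      ⟨i, ((mem_II_iff hk ha0 hmono hgcd).1 hi).1, _, _, rfl⟩
  have hlt2 : deg k a (w k a i + (n1 * a k, 0 * a k)) <
      delta2 k a (w k a i + (n1 * a k, 0 * a k)).2 := by
    rw [deg_add_mul hd]
    simp only [Prod.snd_add, zero_mul, add_zero]
    omega
  have hlt1 := ((mem_S'_diff_S_iff_delta1 hk ha0 hmono).1
    ((mem_S'_diff_S_iff_delta2 hk ha0 hmono).2 ⟨hu, hlt2⟩)).2
  simp only [deg_add_mul hd, Prod.fst_add, fst_w] at hlt1
  omega

lemma S'_diff_S_eq (hk : 0 < k) (ha0 : a 0 = 0)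
    (hmono : ∀ i, i < k → a i < a (i+1)) (hgcd : (Finset.Icc 1 k).gcd a = 1) :
    S' k a \ S k a =
      {u | ∃ i ∈ II k a, ∃ n1 n2 : ℕ,
        n1 + deg k a (w k a i) + 1 ≤ delta2 k a (w k a i).2 ∧
        n2 + deg k a (w k a i) + n1 + 1 ≤ delta1 k a (omega1 k a i + n1 * a k) ∧
        u = w k a i + (n1 * a k, n2 * a k)} := by
  have hd := d_pos hk ha0 hmono
  ext u
  constructor
  · intro hu
    obtain ⟨hS', hlt1⟩ := (mem_S'_diff_S_iff_delta1 hk ha0 hmono).1 hu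
    have hlt2 := ((mem_S'_diff_S_iff_delta2 hk ha0 hmono).1 hu).2
    obtain ⟨i, hid, n1, n2, rfl⟩ := (mem_S'_iff_exists_w hk ha0 hmono hgcd).1 hS'
    have hle1 := (add_mul_mem_S1_and_delta1_le hk (omega1_spec hk ha0 hmono hgcd i).1 n1).2
    have hle2 :=
      (add_mul_mem_S2_and_delta2_le hk ha0 (omega2_spec hk ha0 hmono hgcd (a k - i)).1 n2).2
    simp only [deg_add_mul hd, Prod.fst_add, Prod.snd_add, fst_w, snd_w] at hlt1 hlt2
    refine ⟨i, (mem_II_iff hk ha0 hmono hgcd).2 ⟨hid, by omega⟩, n1, n2, ?_, by omega, rfl⟩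
    rw [snd_w]
    omega
  · rintro ⟨i, hi, n1, n2, -, hn2, rfl⟩
    refine (mem_S'_diff_S_iff_delta1 hk ha0 hmono).2 ⟨(mem_S'_iff_exists_w hk ha0 hmono hgcd).2
      ⟨i, ((mem_II_iff hk ha0 hmono hgcd).1 hi).1, n1, n2, rfl⟩, ?_⟩
    simp only [deg_add_mul hd, Prod.fst_add, fst_w]
    omega

lemma sSup_deg_S'_diff_S_eq (hk : 0 < k) (ha0 : a 0 = 0)
    (hmono : ∀ i, i < k → a i < a (i+1)) (hgcd : (Finset.Icc 1 k).gcd a = 1) :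
    sSup {m | ∃ u ∈ S' k a \ S k a, m = deg k a u} =
      sSup {m | ∃ i ∈ II k a, ∃ n1 : ℕ,
        n1 + deg k a (w k a i) + 1 ≤ delta2 k a (w k a i).2 ∧
        m = deg k a (w k a i + (n1 * a k,
          (delta1 k a (omega1 k a i + n1 * a k) - (deg k a (w k a i) + n1 + 1)) * a k))} := by
  have hd := d_pos hk ha0 hmono
  rw [S'_diff_S_eq hk ha0 hmono hgcd]
  refine csSup_eq_csSup_of_forall_exists_le ?_ ?_
  · rintro _ ⟨_, ⟨i, hi, n1, n2, hn1, hn2, rfl⟩, rfl⟩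
    refine ⟨_, ⟨i, hi, n1, hn1, rfl⟩, ?_⟩
    simp only [deg_add_mul hd]
    omega
  · rintro _ ⟨i, hi, n1, hn1, rfl⟩
    have := deg_w_add_le_delta1 hk ha0 hmono hgcd hi hn1
    exact ⟨_, ⟨_, ⟨i, hi, n1, _, hn1, by omega, rfl⟩, rfl⟩, le_rfl⟩

end Curve

theorem statement_10_general (k : ℕ) (a : ℕ → ℕ) (hk : 3 ≤ k) (ha0 : a 0 = 0)
    (hmono : ∀ i, i < k → a i < a (i+1)) (hgcd : (Finset.Icc 1 k).gcd a = 1) :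
    (∀ i ∈ II k a, deg k a (w k a i) + 1 ≤ delta2 k a (w k a i).2) ∧
    (∀ i ∈ II k a, ∀ n1 : ℕ, n1 + deg k a (w k a i) + 1 ≤ delta2 k a (w k a i).2 →
      deg k a (w k a i) + n1 + 1 ≤ delta1 k a (omega1 k a i + n1 * a k)) ∧
    (S' k a \ S k a =
      {u | ∃ i ∈ II k a, ∃ n1 n2 : ℕ,
        n1 + deg k a (w k a i) + 1 ≤ delta2 k a (w k a i).2 ∧
        n2 + deg k a (w k a i) + n1 + 1 ≤ delta1 k a (omega1 k a i + n1 * a k) ∧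
        u = w k a i + (n1 * a k, n2 * a k)}) ∧
    (sSup {m | ∃ u ∈ S' k a \ S k a, m = deg k a u} =
      sSup {m | ∃ i ∈ II k a, ∃ n1 : ℕ,
        n1 + deg k a (w k a i) + 1 ≤ delta2 k a (w k a i).2 ∧
        m = deg k a (w k a i + (n1 * a k,
          (delta1 k a (omega1 k a i + n1 * a k) - (deg k a (w k a i) + n1 + 1)) * a k))}) ∧
    ((S' k a \ S k a).ncard =
      {u | ∃ i ∈ II k a, ∃ n1 n2 : ℕ,
        n1 + deg k a (w k a i) + 1 ≤ delta2 k a (w k a i).2 ∧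
        n2 + deg k a (w k a i) + n1 + 1 ≤ delta1 k a (omega1 k a i + n1 * a k) ∧
        u = w k a i + (n1 * a k, n2 * a k)}.ncard) := by
  have hk0 : 0 < k := by omega
  have hdiff := S'_diff_S_eq hk0 ha0 hmono hgcd
  exact ⟨fun i hi => deg_w_add_one_le_delta2 hk0 ha0 hmono hgcd hi,
    fun i hi n1 hn1 => deg_w_add_le_delta1 hk0 ha0 hmono hgcd hi hn1, hdiff,
    sSup_deg_S'_diff_S_eq hk0 ha0 hmono hgcd, by rw [hdiff]⟩

theorem statement_10 (k : ℕ) (a : ℕ → ℕ) (hk : 3 ≤ k) (ha0 : a 0 = 0)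
    (hmono : ∀ i, i < k → a i < a (i+1)) (hgcd : (Finset.Icc 1 k).gcd a = 1)
    (hne : (S' k a \ S k a).Nonempty) :
    (∀ i ∈ II k a, deg k a (w k a i) + 1 ≤ delta2 k a (w k a i).2) ∧
    (∀ i ∈ II k a, ∀ n1 : ℕ, n1 + deg k a (w k a i) + 1 ≤ delta2 k a (w k a i).2 →
      deg k a (w k a i) + n1 + 1 ≤ delta1 k a (omega1 k a i + n1 * a k)) ∧
    (S' k a \ S k a =
      {u | ∃ i ∈ II k a, ∃ n1 n2 : ℕ,
        n1 + deg k a (w k a i) + 1 ≤ delta2 k a (w k a i).2 ∧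
        n2 + deg k a (w k a i) + n1 + 1 ≤ delta1 k a (omega1 k a i + n1 * a k) ∧
        u = w k a i + (n1 * a k, n2 * a k)}) ∧
    (sSup {m | ∃ u ∈ S' k a \ S k a, m = deg k a u} =
      sSup {m | ∃ i ∈ II k a, ∃ n1 : ℕ,
        n1 + deg k a (w k a i) + 1 ≤ delta2 k a (w k a i).2 ∧
        m = deg k a (w k a i + (n1 * a k,
          (delta1 k a (omega1 k a i + n1 * a k) - (deg k a (w k a i) + n1 + 1)) * a k))}) ∧
    ((S' k a \ S k a).ncard =
      {u | ∃ i ∈ II k a, ∃ n1 n2 : ℕ,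
        n1 + deg k a (w k a i) + 1 ≤ delta2 k a (w k a i).2 ∧
        n2 + deg k a (w k a i) + n1 + 1 ≤ delta1 k a (omega1 k a i + n1 * a k) ∧
        u = w k a i + (n1 * a k, n2 * a k)}.ncard) :=
  statement_10_general k a hk ha0 hmono hgcd

end ProjMonomialCurve
end

section
/- Assume 𝕀 ≠ ∅. Then max{deg(u) : u ∈ S′∖S} ≥ max_{i∈𝕀} max{δ₁(w_i), δ₂(w_i)} − 1. -/
namespace ProjMonomialCurve

/-! ### Auxiliary lemmas -/

private lemma bezout_aux (f : ℕ → ℕ) :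
    ∀ (s : Finset ℕ), ∃ c : ℕ → ℤ, ((s.gcd f : ℕ) : ℤ) = ∑ i ∈ s, c i * f i := by
  classical
  intro s
  induction s using Finset.induction_on with
  | empty => exact ⟨0, by simp⟩
  | @insert b s hb ih =>
    obtain ⟨c, hc⟩ := ih
    refine ⟨fun i => if i = b then Nat.gcdA (f b) (s.gcd f) else Nat.gcdB (f b) (s.gcd f) * c i, ?_⟩
    rw [Finset.gcd_insert, Finset.sum_insert hb]
    simp only [if_pos rfl]
    have h2 : ∑ i ∈ s, (if i = b then Nat.gcdA (f b) (s.gcd f)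
          else Nat.gcdB (f b) (s.gcd f) * c i) * (f i : ℤ)
        = Nat.gcdB (f b) (s.gcd f) * ∑ i ∈ s, c i * f i := by
      rw [Finset.mul_sum]
      refine Finset.sum_congr rfl fun i hi => ?_
      rw [if_neg (by rintro rfl; exact hb hi)]
      ring
    rw [h2, ← hc]
    have h3 := Nat.gcd_eq_gcd_ab (f b) (s.gcd f)
    have hg : (gcd (f b) (s.gcd f) : ℕ) = Nat.gcd (f b) (s.gcd f) := rfl
    rw [hg, h3]
    simp [mul_comm]

private lemma sum_modEq {d : ℤ} (s : Finset ℕ) (F G : ℕ → ℤ)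
    (h : ∀ i ∈ s, F i ≡ G i [ZMOD d]) : (∑ i ∈ s, F i) ≡ ∑ i ∈ s, G i [ZMOD d] := by
  classical
  induction s using Finset.induction_on with
  | empty => simp [Int.ModEq.refl]
  | @insert b s hb ih =>
    rw [Finset.sum_insert hb, Finset.sum_insert hb]
    exact (h b (Finset.mem_insert_self b s)).add
      (ih fun i hi => h i (Finset.mem_insert_of_mem hi))

private lemma exists_mod_eq {s : Finset ℕ} {g : ℕ → ℕ} {d : ℕ} (hd : 0 < d)
    (hbez : ∃ c : ℕ → ℤ, (1 : ℤ) ≡ ∑ i ∈ s, c i * g i [ZMOD (d : ℤ)]) (r : ℕ) :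
    ∃ x : ℕ → ℕ, (∑ i ∈ s, x i * g i) % d = r % d := by
  obtain ⟨c, hc⟩ := hbez
  refine ⟨fun i => ((r : ℤ) * c i % d).toNat, ?_⟩
  have hx : ∀ i, ((((r : ℤ) * c i % d).toNat : ℤ)) = (r : ℤ) * c i % d := fun i =>
    Int.toNat_of_nonneg (Int.emod_nonneg _ (by exact_mod_cast hd.ne'))
  have key : ((∑ i ∈ s, ((r : ℤ) * c i % d).toNat * g i : ℕ) : ℤ) ≡ (r : ℤ) [ZMOD (d : ℤ)] := by
    push_cast
    calc ∑ i ∈ s, (((r : ℤ) * c i % d).toNat : ℤ) * g i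
        ≡ ∑ i ∈ s, ((r : ℤ) * c i) * g i [ZMOD (d : ℤ)] := by
          refine sum_modEq s _ _ fun i hi => ?_
          rw [hx i]
          exact Int.ModEq.mul_right _ (Int.emod_emod_of_dvd _ dvd_rfl)
      _ = (r : ℤ) * ∑ i ∈ s, c i * g i := by rw [Finset.mul_sum]; exact Finset.sum_congr rfl fun i _ => by ring
      _ ≡ (r : ℤ) * 1 [ZMOD (d : ℤ)] := Int.ModEq.mul_left _ hc.symm
      _ = (r : ℤ) := by ring
  have : (((∑ i ∈ s, ((r : ℤ) * c i % d).toNat * g i) % d : ℕ) : ℤ) = ((r % d : ℕ) : ℤ) := by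
    rw [Int.natCast_mod, Int.natCast_mod]
    exact key
  exact_mod_cast this

private lemma amono {k : ℕ} {a : ℕ → ℕ} (hmono : ∀ i, i < k → a i < a (i+1)) :
    ∀ j, j ≤ k → ∀ i, i < j → a i < a j := by
  intro j
  induction j with
  | zero => omega
  | succ m ih =>
    intro hm i hi
    rcases Nat.lt_succ_iff_lt_or_eq.mp hi with h | h
    · exact lt_trans (ih (by omega) i h) (hmono m (by omega))
    · subst h; exact hmono i (by omega)

private lemma S1_add {k : ℕ} {a : ℕ → ℕ} {m n : ℕ} (hm : m ∈ S1 k a) (hn : n ∈ S1 k a) :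
    m + n ∈ S1 k a := by
  obtain ⟨x, hx⟩ := hm; obtain ⟨y, hy⟩ := hn
  exact ⟨fun i => x i + y i, by simp [hx, hy, add_mul, Finset.sum_add_distrib]⟩

private lemma S2_add {k : ℕ} {a : ℕ → ℕ} {m n : ℕ} (hm : m ∈ S2 k a) (hn : n ∈ S2 k a) :
    m + n ∈ S2 k a := by
  obtain ⟨x, hx⟩ := hm; obtain ⟨y, hy⟩ := hn
  exact ⟨fun i => x i + y i, by simp [hx, hy, add_mul, Finset.sum_add_distrib]⟩

private lemma S1_single {k : ℕ} {a : ℕ → ℕ} {j : ℕ} (hj : j ∈ Finset.Icc 1 k) (c : ℕ) :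
    c * a j ∈ S1 k a := by
  classical
  refine ⟨fun i => if i = j then c else 0, ?_⟩
  simp only [ite_mul, zero_mul]
  rw [Finset.sum_ite_eq' (Finset.Icc 1 k) j (fun i => c * a i), if_pos hj]

private lemma S2_single {k : ℕ} {a : ℕ → ℕ} {j : ℕ} (hj : j ∈ Finset.range k) (c : ℕ) :
    c * (a k - a j) ∈ S2 k a := by
  classical
  refine ⟨fun i => if i = j then c else 0, ?_⟩
  simp only [ite_mul, zero_mul]
  rw [Finset.sum_ite_eq' (Finset.range k) j (fun i => c * (a k - a i)), if_pos hj]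

private lemma d_mem_S1 {k : ℕ} {a : ℕ → ℕ} (hk : 1 ≤ k) (c : ℕ) : c * a k ∈ S1 k a :=
  S1_single (Finset.mem_Icc.mpr ⟨hk, le_refl k⟩ : k ∈ Finset.Icc 1 k) c

private lemma d_mem_S2 {k : ℕ} {a : ℕ → ℕ} (hk : 1 ≤ k) (ha0 : a 0 = 0) (c : ℕ) :
    c * a k ∈ S2 k a := by
  have := S2_single (a := a) (Finset.mem_range.mpr (by omega) : (0:ℕ) ∈ Finset.range k) c
  rwa [ha0, Nat.sub_zero] at this

private lemma delta1_spec {k : ℕ} {a : ℕ → ℕ} {n : ℕ} (hn : n ∈ S1 k a) :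
    ∃ x : ℕ → ℕ, n = ∑ i ∈ Finset.Icc 1 k, x i * a i ∧
      delta1 k a n = ∑ i ∈ Finset.Icc 1 k, x i := by
  obtain ⟨x, hx⟩ := hn
  have hne : {m | ∃ x : ℕ → ℕ, n = ∑ i ∈ Finset.Icc 1 k, x i * a i ∧
      m = ∑ i ∈ Finset.Icc 1 k, x i}.Nonempty := ⟨_, x, hx, rfl⟩
  obtain ⟨y, hy1, hy2⟩ := Nat.sInf_mem hne
  exact ⟨y, hy1, hy2⟩

private lemma delta1_le {k : ℕ} {a : ℕ → ℕ} {n : ℕ} (x : ℕ → ℕ)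
    (hx : n = ∑ i ∈ Finset.Icc 1 k, x i * a i) :
    delta1 k a n ≤ ∑ i ∈ Finset.Icc 1 k, x i :=
  Nat.sInf_le ⟨x, hx, rfl⟩

private lemma delta2_spec {k : ℕ} {a : ℕ → ℕ} {n : ℕ} (hn : n ∈ S2 k a) :
    ∃ x : ℕ → ℕ, n = ∑ i ∈ Finset.range k, x i * (a k - a i) ∧
      delta2 k a n = ∑ i ∈ Finset.range k, x i := by
  obtain ⟨x, hx⟩ := hn
  have hne : {m | ∃ x : ℕ → ℕ, n = ∑ i ∈ Finset.range k, x i * (a k - a i) ∧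
      m = ∑ i ∈ Finset.range k, x i}.Nonempty := ⟨_, x, hx, rfl⟩
  obtain ⟨y, hy1, hy2⟩ := Nat.sInf_mem hne
  exact ⟨y, hy1, hy2⟩

private lemma delta2_le {k : ℕ} {a : ℕ → ℕ} {n : ℕ} (x : ℕ → ℕ)
    (hx : n = ∑ i ∈ Finset.range k, x i * (a k - a i)) :
    delta2 k a n ≤ ∑ i ∈ Finset.range k, x i :=
  Nat.sInf_le ⟨x, hx, rfl⟩

private lemma delta1_add_d {k : ℕ} {a : ℕ → ℕ} {n : ℕ} (hk : 1 ≤ k) (hn : n ∈ S1 k a) :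
    delta1 k a (n + a k) ≤ delta1 k a n + 1 := by
  classical
  obtain ⟨x, hx, hδ⟩ := delta1_spec hn
  have hmem : k ∈ Finset.Icc 1 k := Finset.mem_Icc.mpr ⟨hk, le_refl k⟩
  have h1 : n + a k = ∑ i ∈ Finset.Icc 1 k, (x i + if i = k then 1 else 0) * a i := by
    simp only [add_mul, ite_mul, one_mul, zero_mul, Finset.sum_add_distrib]
    rw [Finset.sum_ite_eq' (Finset.Icc 1 k) k (fun i => a i), if_pos hmem, hx]
  have h2 := delta1_le _ h1
  calc delta1 k a (n + a k) ≤ ∑ i ∈ Finset.Icc 1 k, (x i + if i = k then 1 else 0) := h2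
    _ = delta1 k a n + 1 := by
        simp only [Finset.sum_add_distrib, hδ]
        rw [Finset.sum_ite_eq' (Finset.Icc 1 k) k (fun _ => 1), if_pos hmem]

private lemma delta2_add_d {k : ℕ} {a : ℕ → ℕ} {n : ℕ} (hk : 1 ≤ k) (ha0 : a 0 = 0)
    (hn : n ∈ S2 k a) : delta2 k a (n + a k) ≤ delta2 k a n + 1 := by
  classical
  obtain ⟨x, hx, hδ⟩ := delta2_spec hn
  have hmem : (0:ℕ) ∈ Finset.range k := Finset.mem_range.mpr (by omega)
  have h1 : n + a k = ∑ i ∈ Finset.range k, (x i + if i = 0 then 1 else 0) * (a k - a i) := by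
    simp only [add_mul, ite_mul, one_mul, zero_mul, Finset.sum_add_distrib]
    rw [Finset.sum_ite_eq' (Finset.range k) 0 (fun i => a k - a i), if_pos hmem, hx, ha0,
      Nat.sub_zero]
  have h2 := delta2_le _ h1
  calc delta2 k a (n + a k) ≤ ∑ i ∈ Finset.range k, (x i + if i = 0 then 1 else 0) := h2
    _ = delta2 k a n + 1 := by
        simp only [Finset.sum_add_distrib, hδ]
        rw [Finset.sum_ite_eq' (Finset.range k) 0 (fun _ => 1), if_pos hmem]

private lemma delta1_add_mul_d {k : ℕ} {a : ℕ → ℕ} {n : ℕ} (hk : 1 ≤ k) (hn : n ∈ S1 k a)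
    (t : ℕ) : delta1 k a (n + t * a k) ≤ delta1 k a n + t := by
  induction t with
  | zero => simp
  | succ m ih =>
    have hmem : n + m * a k ∈ S1 k a := S1_add hn (d_mem_S1 hk m)
    have h1 : n + (m+1) * a k = (n + m * a k) + a k := by ring
    rw [h1]
    calc delta1 k a ((n + m * a k) + a k) ≤ delta1 k a (n + m * a k) + 1 :=
          delta1_add_d hk hmem
      _ ≤ delta1 k a n + m + 1 := by omega

private lemma delta2_add_mul_d {k : ℕ} {a : ℕ → ℕ} {n : ℕ} (hk : 1 ≤ k) (ha0 : a 0 = 0)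
    (hn : n ∈ S2 k a) (t : ℕ) : delta2 k a (n + t * a k) ≤ delta2 k a n + t := by
  induction t with
  | zero => simp
  | succ m ih =>
    have hmem : n + m * a k ∈ S2 k a := S2_add hn (d_mem_S2 hk ha0 m)
    have h1 : n + (m+1) * a k = (n + m * a k) + a k := by ring
    rw [h1]
    calc delta2 k a ((n + m * a k) + a k) ≤ delta2 k a (n + m * a k) + 1 :=
          delta2_add_d hk ha0 hmem
      _ ≤ delta2 k a n + m + 1 := by omega

private lemma S1_residue {k : ℕ} {a : ℕ → ℕ} (hd : 0 < a k)
    (hgcd : (Finset.Icc 1 k).gcd a = 1) (r : ℕ) :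
    ∃ n ∈ S1 k a, n % a k = r % a k := by
  obtain ⟨c, hc⟩ := bezout_aux a (Finset.Icc 1 k)
  rw [hgcd] at hc
  push_cast at hc
  have hbez : ∃ c : ℕ → ℤ, (1 : ℤ) ≡ ∑ i ∈ Finset.Icc 1 k, c i * a i [ZMOD ((a k : ℕ) : ℤ)] :=
    ⟨c, by rw [← hc]⟩
  obtain ⟨x, hx⟩ := exists_mod_eq hd hbez r
  exact ⟨_, ⟨x, rfl⟩, hx⟩

private lemma range_succ_decomp (k : ℕ) (hk : 1 ≤ k) :
    Finset.range (k+1) = insert 0 (Finset.Icc 1 k) := by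
  ext i
  simp only [Finset.mem_range, Finset.mem_insert, Finset.mem_Icc]
  omega

private lemma S2_residue {k : ℕ} {a : ℕ → ℕ} (hk : 1 ≤ k) (ha0 : a 0 = 0) (hd : 0 < a k)
    (hale : ∀ i, i ≤ k → a i ≤ a k)
    (hgcd : (Finset.Icc 1 k).gcd a = 1) (r : ℕ) :
    ∃ n ∈ S2 k a, n % a k = r % a k := by
  obtain ⟨c, hc⟩ := bezout_aux a (Finset.Icc 1 k)
  rw [hgcd] at hc
  push_cast at hc
  -- ∑_{i ∈ range (k+1)} c i * a i = 1  (since a 0 = 0)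
  have h1 : ∑ i ∈ Finset.range (k+1), c i * (a i : ℤ) = 1 := by
    rw [range_succ_decomp k hk, Finset.sum_insert (by simp), ha0, ← hc]
    simp
  -- ∑_{i ∈ range k} c i * a i = 1 - c k * a k
  have h2 : ∑ i ∈ Finset.range k, c i * (a i : ℤ) = 1 - c k * a k := by
    have := Finset.sum_range_succ (fun i => c i * (a i : ℤ)) k
    rw [h1] at this
    linarith
  have hbez : ∃ c' : ℕ → ℤ,
      (1 : ℤ) ≡ ∑ i ∈ Finset.range k, c' i * ((a k - a i : ℕ) : ℤ) [ZMOD ((a k : ℕ) : ℤ)] := by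
    refine ⟨fun i => - c i, ?_⟩
    have h3 : ∑ i ∈ Finset.range k, (- c i) * ((a k - a i : ℕ) : ℤ)
        = (∑ i ∈ Finset.range k, c i * (a i : ℤ)) - (∑ i ∈ Finset.range k, c i) * (a k : ℤ) := by
      rw [Finset.sum_mul, ← Finset.sum_sub_distrib]
      refine Finset.sum_congr rfl fun i hi => ?_
      have hle : a i ≤ a k := hale i (le_of_lt (Finset.mem_range.mp hi))
      have hcast : ((a k - a i : ℕ) : ℤ) = (a k : ℤ) - a i := by omega
      rw [hcast]; ring
    rw [h3, h2]
    have : (1:ℤ) - (1 - c k * a k - (∑ i ∈ Finset.range k, c i) * a k)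
        = (c k + ∑ i ∈ Finset.range k, c i) * a k := by ring
    exact (Int.modEq_iff_dvd.mpr ⟨-(c k + ∑ i ∈ Finset.range k, c i), by linarith [this]⟩)
  obtain ⟨x, hx⟩ := exists_mod_eq hd hbez r
  exact ⟨_, ⟨x, rfl⟩, hx⟩

private lemma S_coords {k : ℕ} {a : ℕ → ℕ} {u : ℕ × ℕ} (hale : ∀ i, i ≤ k → a i ≤ a k)
    (hu : u ∈ S k a) :
    ∃ x : ℕ → ℕ, u.1 = ∑ i ∈ Finset.range (k+1), x i * a i ∧
      u.2 = ∑ i ∈ Finset.range (k+1), x i * (a k - a i) ∧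
      u.1 + u.2 = (∑ i ∈ Finset.range (k+1), x i) * a k := by
  obtain ⟨x, hx⟩ := hu
  have h1 : u.1 = ∑ i ∈ Finset.range (k+1), x i * a i := by
    rw [hx, Prod.fst_sum]
    exact Finset.sum_congr rfl fun i _ => by simp [e, smul_eq_mul]
  have h2 : u.2 = ∑ i ∈ Finset.range (k+1), x i * (a k - a i) := by
    rw [hx, Prod.snd_sum]
    exact Finset.sum_congr rfl fun i _ => by simp [e, smul_eq_mul]
  refine ⟨x, h1, h2, ?_⟩
  rw [h1, h2, ← Finset.sum_add_distrib, Finset.sum_mul]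
  refine Finset.sum_congr rfl fun i hi => ?_
  have hle : a i ≤ a k := hale i (by simpa [Nat.lt_succ_iff] using hi)
  rw [← Nat.mul_add, Nat.add_sub_cancel' hle]

private lemma deg_of_mem_S {k : ℕ} {a : ℕ → ℕ} {u : ℕ × ℕ} (hd : 0 < a k)
    (hale : ∀ i, i ≤ k → a i ≤ a k) (hu : u ∈ S k a) :
    ∃ x : ℕ → ℕ, u.1 = ∑ i ∈ Finset.range (k+1), x i * a i ∧
      u.2 = ∑ i ∈ Finset.range (k+1), x i * (a k - a i) ∧
      deg k a u = ∑ i ∈ Finset.range (k+1), x i := by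
  obtain ⟨x, h1, h2, h3⟩ := S_coords hale hu
  exact ⟨x, h1, h2, by rw [deg, h3, Nat.mul_div_cancel _ hd]⟩

/-- If `u ∈ S` then `u.1 ∈ S1` and `δ₁(u.1) ≤ deg u`. -/
private lemma S_delta1 {k : ℕ} {a : ℕ → ℕ} {u : ℕ × ℕ} (hk : 1 ≤ k) (ha0 : a 0 = 0)
    (hd : 0 < a k) (hale : ∀ i, i ≤ k → a i ≤ a k) (hu : u ∈ S k a) :
    u.1 ∈ S1 k a ∧ delta1 k a u.1 ≤ deg k a u := by
  obtain ⟨x, h1, h2, h3⟩ := deg_of_mem_S hd hale hu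
  have hdec := range_succ_decomp k hk
  have hnot : (0:ℕ) ∉ Finset.Icc 1 k := by simp
  have h1' : u.1 = ∑ i ∈ Finset.Icc 1 k, x i * a i := by
    rw [h1, hdec, Finset.sum_insert hnot, ha0]
    simp
  refine ⟨⟨x, h1'⟩, ?_⟩
  rw [h3, hdec, Finset.sum_insert hnot]
  have := delta1_le x h1'
  omega

/-- If `u ∈ S` then `u.2 ∈ S2` and `δ₂(u.2) ≤ deg u`. -/
private lemma S_delta2 {k : ℕ} {a : ℕ → ℕ} {u : ℕ × ℕ} (hd : 0 < a k)
    (hale : ∀ i, i ≤ k → a i ≤ a k) (hu : u ∈ S k a) :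
    u.2 ∈ S2 k a ∧ delta2 k a u.2 ≤ deg k a u := by
  obtain ⟨x, h1, h2, h3⟩ := deg_of_mem_S hd hale hu
  have h2' : u.2 = ∑ i ∈ Finset.range k, x i * (a k - a i) := by
    rw [h2, Finset.sum_range_succ, Nat.sub_self]
    simp
  refine ⟨⟨x, h2'⟩, ?_⟩
  rw [h3, Finset.sum_range_succ]
  have := delta2_le x h2'
  omega

private lemma S_dvd {k : ℕ} {a : ℕ → ℕ} {u : ℕ × ℕ} (hale : ∀ i, i ≤ k → a i ≤ a k)
    (hu : u ∈ S k a) : a k ∣ u.1 + u.2 := by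
  obtain ⟨x, _, _, h3⟩ := S_coords hale hu
  exact ⟨_, by rw [h3, Nat.mul_comm]⟩

/-- Converse: if `u.1 ∈ S1`, `d ∣ u.1 + u.2` and `δ₁(u.1) ≤ deg u` then `u ∈ S`. -/
private lemma S_of_delta1 {k : ℕ} {a : ℕ → ℕ} {u : ℕ × ℕ} (hk : 1 ≤ k) (ha0 : a 0 = 0)
    (hd : 0 < a k) (hale : ∀ i, i ≤ k → a i ≤ a k) (h1 : u.1 ∈ S1 k a)
    (h2 : a k ∣ u.1 + u.2) (h3 : delta1 k a u.1 ≤ deg k a u) : u ∈ S k a := by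
  classical
  obtain ⟨x, hx, hδ⟩ := delta1_spec h1
  set δ := delta1 k a u.1 with hδdef
  set D := deg k a u with hD
  set E := D - δ with hE
  have hdec := range_succ_decomp k hk
  have hnot : (0:ℕ) ∉ Finset.Icc 1 k := by simp
  set y : ℕ → ℕ := fun i => if i = 0 then E else x i with hy
  have hyIcc : ∀ i ∈ Finset.Icc 1 k, y i = x i := by
    intro i hi
    have : i ≠ 0 := by simp only [Finset.mem_Icc] at hi; omega
    simp [hy, this]
  -- key arithmetic
  have hU : u.1 + u.2 = D * a k := by
    rw [hD, deg, Nat.div_mul_cancel h2]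
  have hS : u.1 + (∑ i ∈ Finset.Icc 1 k, x i * (a k - a i)) = δ * a k := by
    rw [hx, hδ, ← Finset.sum_add_distrib, Finset.sum_mul]
    refine Finset.sum_congr rfl fun i hi => ?_
    have hle : a i ≤ a k := hale i (by simp only [Finset.mem_Icc] at hi; omega)
    rw [← Nat.mul_add, Nat.add_sub_cancel' hle]
  have hDE : D = δ + E := by omega
  have hu2 : u.2 = (∑ i ∈ Finset.Icc 1 k, x i * (a k - a i)) + E * a k := by
    have key : u.1 + u.2
        = u.1 + ((∑ i ∈ Finset.Icc 1 k, x i * (a k - a i)) + E * a k) := by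
      rw [hU, hDE, Nat.add_mul, ← hS]; ring
    omega
  refine ⟨y, ?_⟩
  have hfst : (∑ i ∈ Finset.range (k+1), y i • e k a (a i)).1 = u.1 := by
    rw [Prod.fst_sum]
    have : ∀ i ∈ Finset.range (k+1), (y i • e k a (a i)).1 = y i * a i :=
      fun i _ => by simp [e, smul_eq_mul]
    rw [Finset.sum_congr rfl this, hdec, Finset.sum_insert hnot]
    rw [Finset.sum_congr rfl (fun i hi => by rw [hyIcc i hi])]
    simp [hy, ha0, ← hx]
  have hsnd : (∑ i ∈ Finset.range (k+1), y i • e k a (a i)).2 = u.2 := by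
    rw [Prod.snd_sum]
    have : ∀ i ∈ Finset.range (k+1), (y i • e k a (a i)).2 = y i * (a k - a i) :=
      fun i _ => by simp [e, smul_eq_mul]
    rw [Finset.sum_congr rfl this, hdec, Finset.sum_insert hnot]
    rw [Finset.sum_congr rfl (fun i hi => by rw [hyIcc i hi])]
    simp only [hy, if_pos rfl, ha0, Nat.sub_zero]
    rw [hu2]; ring
  exact (Prod.ext_iff.mpr ⟨hfst.symm, hsnd.symm⟩)

/-- Converse: if `u.2 ∈ S2`, `d ∣ u.1 + u.2` and `δ₂(u.2) ≤ deg u` then `u ∈ S`. -/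
private lemma S_of_delta2 {k : ℕ} {a : ℕ → ℕ} {u : ℕ × ℕ}
    (hd : 0 < a k) (hale : ∀ i, i ≤ k → a i ≤ a k) (h1 : u.2 ∈ S2 k a)
    (h2 : a k ∣ u.1 + u.2) (h3 : delta2 k a u.2 ≤ deg k a u) : u ∈ S k a := by
  classical
  obtain ⟨x, hx, hδ⟩ := delta2_spec h1
  set δ := delta2 k a u.2 with hδdef
  set D := deg k a u with hD
  set E := D - δ with hE
  set y : ℕ → ℕ := fun i => if i = k then E else x i with hy
  have hyr : ∀ i ∈ Finset.range k, y i = x i := by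
    intro i hi
    have : i ≠ k := by simp only [Finset.mem_range] at hi; omega
    simp [hy, this]
  have hU : u.1 + u.2 = D * a k := by
    rw [hD, deg, Nat.div_mul_cancel h2]
  have hS : u.2 + (∑ i ∈ Finset.range k, x i * a i) = δ * a k := by
    rw [hx, hδ, ← Finset.sum_add_distrib, Finset.sum_mul]
    refine Finset.sum_congr rfl fun i hi => ?_
    have hle : a i ≤ a k := hale i (le_of_lt (Finset.mem_range.mp hi))
    rw [← Nat.mul_add, Nat.sub_add_cancel hle]
  have hDE : D = δ + E := by omega
  have hu1 : u.1 = (∑ i ∈ Finset.range k, x i * a i) + E * a k := by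
    have key : u.2 + u.1
        = u.2 + ((∑ i ∈ Finset.range k, x i * a i) + E * a k) := by
      rw [Nat.add_comm u.2 u.1, hU, hDE, Nat.add_mul, ← hS]; ring
    omega
  refine ⟨y, ?_⟩
  have hfst : (∑ i ∈ Finset.range (k+1), y i • e k a (a i)).1 = u.1 := by
    rw [Prod.fst_sum]
    have : ∀ i ∈ Finset.range (k+1), (y i • e k a (a i)).1 = y i * a i :=
      fun i _ => by simp [e, smul_eq_mul]
    rw [Finset.sum_congr rfl this, Finset.sum_range_succ]
    rw [Finset.sum_congr rfl (fun i hi => by rw [hyr i hi])]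
    simp only [hy, if_pos rfl]
    rw [hu1]
  have hsnd : (∑ i ∈ Finset.range (k+1), y i • e k a (a i)).2 = u.2 := by
    rw [Prod.snd_sum]
    have : ∀ i ∈ Finset.range (k+1), (y i • e k a (a i)).2 = y i * (a k - a i) :=
      fun i _ => by simp [e, smul_eq_mul]
    rw [Finset.sum_congr rfl this, Finset.sum_range_succ]
    rw [Finset.sum_congr rfl (fun i hi => by rw [hyr i hi])]
    simp [Nat.sub_self, ← hx]
  exact (Prod.ext_iff.mpr ⟨hfst.symm, hsnd.symm⟩)

private lemma e_zero {k : ℕ} {a : ℕ → ℕ} : e k a 0 = (0, a k) := by simp [e]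

private lemma e_d {k : ℕ} {a : ℕ → ℕ} : e k a (a k) = (a k, 0) := by simp [e]

private lemma add_smul_e0 {k : ℕ} {a : ℕ → ℕ} (u : ℕ × ℕ) (p : ℕ) :
    u + p • e k a 0 = (u.1, u.2 + p * a k) := by
  rw [e_zero]; ext <;> simp [smul_eq_mul]

private lemma add_smul_ed {k : ℕ} {a : ℕ → ℕ} (u : ℕ × ℕ) (p : ℕ) :
    u + p • e k a (a k) = (u.1 + p * a k, u.2) := by
  rw [e_d]; ext <;> simp [smul_eq_mul]

private lemma deg_pair {k : ℕ} {a : ℕ → ℕ} (hd : 0 < a k) {m n : ℕ} (t : ℕ)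
    (hdvd : a k ∣ m + n) :
    deg k a (m, n + t * a k) = deg k a (m, n) + t := by
  show (m + (n + t * a k)) / a k = (m + n) / a k + t
  rw [← Nat.add_assoc, Nat.add_mul_div_right _ _ hd]

private lemma deg_pair' {k : ℕ} {a : ℕ → ℕ} (hd : 0 < a k) {m n : ℕ} (t : ℕ)
    (hdvd : a k ∣ m + n) :
    deg k a (m + t * a k, n) = deg k a (m, n) + t := by
  show ((m + t * a k) + n) / a k = (m + n) / a k + t
  have : (m + t * a k) + n = (m + n) + t * a k := by ring
  rw [this, Nat.add_mul_div_right _ _ hd]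

private lemma mem_S' {k : ℕ} {a : ℕ → ℕ} {u : ℕ × ℕ} (hk : 1 ≤ k) (ha0 : a 0 = 0)
    (hd : 0 < a k) (hale : ∀ i, i ≤ k → a i ≤ a k) (h1 : u.1 ∈ S1 k a) (h2 : u.2 ∈ S2 k a)
    (hdvd : a k ∣ u.1 + u.2) : u ∈ S' k a := by
  refine ⟨delta1 k a u.1 + delta2 k a u.2, ?_, ?_⟩
  · rw [add_smul_e0]
    refine S_of_delta1 hk ha0 hd hale h1 ?_ ?_
    · show a k ∣ u.1 + (u.2 + _ * a k)
      rw [← Nat.add_assoc]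
      exact Nat.dvd_add hdvd (dvd_mul_left _ _)
    · show delta1 k a u.1 ≤ deg k a (u.1, u.2 + _ * a k)
      rw [deg_pair hd _ hdvd]
      omega
  · rw [add_smul_ed]
    refine S_of_delta2 hd hale h2 ?_ ?_
    · show a k ∣ (u.1 + _ * a k) + u.2
      have : (u.1 + (delta1 k a u.1 + delta2 k a u.2) * a k) + u.2
          = (u.1 + u.2) + (delta1 k a u.1 + delta2 k a u.2) * a k := by ring
      rw [this]
      exact Nat.dvd_add hdvd (dvd_mul_left _ _)
    · show delta2 k a u.2 ≤ deg k a (u.1 + _ * a k, u.2)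
      rw [deg_pair' hd _ hdvd]
      omega

private lemma S'_props {k : ℕ} {a : ℕ → ℕ} {u : ℕ × ℕ} (hk : 1 ≤ k) (ha0 : a 0 = 0)
    (hd : 0 < a k) (hale : ∀ i, i ≤ k → a i ≤ a k) (hu : u ∈ S' k a) :
    u.1 ∈ S1 k a ∧ u.2 ∈ S2 k a ∧ a k ∣ u.1 + u.2 := by
  obtain ⟨p, hp0, hpd⟩ := hu
  rw [add_smul_e0] at hp0
  rw [add_smul_ed] at hpd
  have h1 := (S_delta1 hk ha0 hd hale hp0).1
  have h2 := (S_delta2 hd hale hpd).1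
  refine ⟨h1, h2, ?_⟩
  have hdvd := S_dvd hale hp0
  simp only at hdvd
  have hsum : u.1 + (u.2 + p * a k) = (u.1 + u.2) + p * a k := by ring
  rw [hsum] at hdvd
  have := Nat.dvd_sub hdvd (dvd_mul_left _ _ : a k ∣ p * a k)
  rwa [Nat.add_sub_cancel] at this

private lemma omega1_mem {k : ℕ} {a : ℕ → ℕ} (hd : 0 < a k)
    (hgcd : (Finset.Icc 1 k).gcd a = 1) (r : ℕ) :
    omega1 k a r ∈ S1 k a ∧ omega1 k a r % a k = r % a k := by
  obtain ⟨n, hn, hmod⟩ := S1_residue hd hgcd r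
  exact Nat.sInf_mem (⟨n, hn, hmod⟩ : {n | n ∈ S1 k a ∧ n % a k = r % a k}.Nonempty)

private lemma omega2_mem {k : ℕ} {a : ℕ → ℕ} (hk : 1 ≤ k) (ha0 : a 0 = 0) (hd : 0 < a k)
    (hale : ∀ i, i ≤ k → a i ≤ a k) (hgcd : (Finset.Icc 1 k).gcd a = 1) (r : ℕ) :
    omega2 k a r ∈ S2 k a ∧ omega2 k a r % a k = r % a k := by
  obtain ⟨n, hn, hmod⟩ := S2_residue hk ha0 hd hale hgcd r
  exact Nat.sInf_mem (⟨n, hn, hmod⟩ : {n | n ∈ S2 k a ∧ n % a k = r % a k}.Nonempty)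

private lemma delta1_bound {k : ℕ} {a : ℕ → ℕ} {n : ℕ} (hk : 1 ≤ k) (hd : 0 < a k)
    (hgcd : (Finset.Icc 1 k).gcd a = 1) (hn : n ∈ S1 k a) :
    ∃ t, delta1 k a n ≤ delta1 k a (omega1 k a (n % a k)) + t ∧ t ≤ n / a k := by
  set ω := omega1 k a (n % a k) with hω
  obtain ⟨hωS, hωmod⟩ := omega1_mem hd hgcd (n % a k)
  rw [Nat.mod_mod_of_dvd _ dvd_rfl] at hωmod
  have hωle : ω ≤ n := Nat.sInf_le ⟨hn, (Nat.mod_mod_of_dvd _ dvd_rfl).symm⟩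
  have hdvd : a k ∣ n - ω := (Nat.modEq_iff_dvd' hωle).mp hωmod
  set t := (n - ω) / a k with ht
  have htmul : t * a k = n - ω := by
    rw [ht, Nat.div_mul_cancel hdvd]
  have hrep : n = ω + t * a k := by omega
  refine ⟨t, ?_, ?_⟩
  · rw [hrep]
    exact delta1_add_mul_d hk hωS t
  · exact Nat.div_le_div_right (Nat.sub_le n ω)

private lemma delta2_bound {k : ℕ} {a : ℕ → ℕ} {n : ℕ} (hk : 1 ≤ k) (ha0 : a 0 = 0)
    (hd : 0 < a k) (hale : ∀ i, i ≤ k → a i ≤ a k)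
    (hgcd : (Finset.Icc 1 k).gcd a = 1) (hn : n ∈ S2 k a) :
    ∃ t, delta2 k a n ≤ delta2 k a (omega2 k a (n % a k)) + t ∧ t ≤ n / a k := by
  set ω := omega2 k a (n % a k) with hω
  obtain ⟨hωS, hωmod⟩ := omega2_mem hk ha0 hd hale hgcd (n % a k)
  rw [Nat.mod_mod_of_dvd _ dvd_rfl] at hωmod
  have hωle : ω ≤ n := Nat.sInf_le ⟨hn, (Nat.mod_mod_of_dvd _ dvd_rfl).symm⟩
  have hdvd : a k ∣ n - ω := (Nat.modEq_iff_dvd' hωle).mp hωmod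
  set t := (n - ω) / a k with ht
  have htmul : t * a k = n - ω := by
    rw [ht, Nat.div_mul_cancel hdvd]
  have hrep : n = ω + t * a k := by omega
  refine ⟨t, ?_, ?_⟩
  · rw [hrep]
    exact delta2_add_mul_d hk ha0 hωS t
  · exact Nat.div_le_div_right (Nat.sub_le n ω)

theorem statement_11 (k : ℕ) (a : ℕ → ℕ) (hk : 3 ≤ k) (ha0 : a 0 = 0)
    (hmono : ∀ i, i < k → a i < a (i+1)) (hgcd : (Finset.Icc 1 k).gcd a = 1)
    (hne : (II k a).Nonempty) :
    sSup {m | ∃ i ∈ II k a,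
        m = max (delta1 k a (w k a i).1) (delta2 k a (w k a i).2)} - 1 ≤
      sSup {m | ∃ u ∈ S' k a \ S k a, m = deg k a u} := by
  classical
  have hk1 : 1 ≤ k := by omega
  have hlt := amono hmono
  have hd : 0 < a k := by
    have := hlt k (le_refl k) 0 (by omega)
    omega
  have hale : ∀ i, i ≤ k → a i ≤ a k := by
    intro i hi
    rcases Nat.lt_or_ge i k with h | h
    · exact le_of_lt (hlt k (le_refl k) i h)
    · have : i = k := by omega
      rw [this]
  set L := {m | ∃ i ∈ II k a,
      m = max (delta1 k a (w k a i).1) (delta2 k a (w k a i).2)} with hLdef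
  set R := {m | ∃ u ∈ S' k a \ S k a, m = deg k a u} with hRdef
  -- R is bounded above by B1 + B2
  have hRbdd : BddAbove R := by
    refine ⟨(Finset.range (a k)).sup (fun r => delta1 k a (omega1 k a r)) + (Finset.range (a k)).sup (fun r => delta2 k a (omega2 k a r)), fun m hm => ?_⟩
    obtain ⟨u, ⟨huS', hunS⟩, rfl⟩ := hm
    obtain ⟨hu1, hu2, hudvd⟩ := S'_props hk1 ha0 hd hale huS'
    have hδ1 : deg k a u < delta1 k a u.1 := by
      by_contra h
      exact hunS (S_of_delta1 hk1 ha0 hd hale hu1 hudvd (by omega))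
    have hδ2 : deg k a u < delta2 k a u.2 := by
      by_contra h
      exact hunS (S_of_delta2 hd hale hu2 hudvd (by omega))
    obtain ⟨t1, ht1, ht1'⟩ := delta1_bound hk1 hd hgcd hu1
    obtain ⟨t2, ht2, ht2'⟩ := delta2_bound hk1 ha0 hd hale hgcd hu2
    have hb1 : delta1 k a (omega1 k a (u.1 % a k)) ≤ (Finset.range (a k)).sup (fun r => delta1 k a (omega1 k a r)) :=
      Finset.le_sup (f := fun r => delta1 k a (omega1 k a r)) (Finset.mem_range.mpr (Nat.mod_lt _ hd))
    have hb2 : delta2 k a (omega2 k a (u.2 % a k)) ≤ (Finset.range (a k)).sup (fun r => delta2 k a (omega2 k a r)) :=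
      Finset.le_sup (f := fun r => delta2 k a (omega2 k a r)) (Finset.mem_range.mpr (Nat.mod_lt _ hd))
    have hdivs : u.1 / a k + u.2 / a k ≤ deg k a u :=
      Nat.add_div_le_add_div u.1 u.2 (a k)
    omega
  -- L is bounded above
  have hLbdd : BddAbove L := by
    refine ⟨(Finset.range (a k)).sup (fun r => delta1 k a (omega1 k a r)) + (Finset.range (a k)).sup (fun r => delta2 k a (omega2 k a r)), fun m hm => ?_⟩
    obtain ⟨i, hi, rfl⟩ := hm
    obtain ⟨hi1, hi2, _, _⟩ := hi
    have hiak : i < a k := by omega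
    have hiak2 : a k - i < a k := by omega
    have hb1 : delta1 k a (omega1 k a i) ≤ (Finset.range (a k)).sup (fun r => delta1 k a (omega1 k a r)) :=
      Finset.le_sup (f := fun r => delta1 k a (omega1 k a r)) (Finset.mem_range.mpr hiak)
    have hb2 : delta2 k a (omega2 k a (a k - i)) ≤ (Finset.range (a k)).sup (fun r => delta2 k a (omega2 k a r)) :=
      Finset.le_sup (f := fun r => delta2 k a (omega2 k a r)) (Finset.mem_range.mpr hiak2)
    have hw1 : (w k a i).1 = omega1 k a i := rfl
    have hw2 : (w k a i).2 = omega2 k a (a k - i) := rfl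
    rw [hw1, hw2]
    omega
  -- L is nonempty
  obtain ⟨i0, hi0⟩ := hne
  have hLne : L.Nonempty := ⟨_, i0, hi0, rfl⟩
  -- the sup of L is attained
  obtain ⟨i, hiII, hival⟩ := Nat.sSup_mem hLne hLbdd
  obtain ⟨hi1, hi2, _, hiδ⟩ := hiII
  set n1 := omega1 k a i with hn1def
  set n2 := omega2 k a (a k - i) with hn2def
  have hw1 : (w k a i).1 = n1 := rfl
  have hw2 : (w k a i).2 = n2 := rfl
  obtain ⟨hn1S, hn1mod⟩ := omega1_mem hd hgcd i
  obtain ⟨hn2S, hn2mod⟩ := omega2_mem hk1 ha0 hd hale hgcd (a k - i)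
  have hdvd : a k ∣ n1 + n2 := by
    apply Nat.dvd_of_mod_eq_zero
    rw [Nat.add_mod, hn1mod, hn2mod, ← Nat.add_mod]
    have h : i + (a k - i) = a k := by omega
    rw [h, Nat.mod_self]
  set D := deg k a (w k a i) with hDdef
  have hDpair : D = deg k a (n1, n2) := rfl
  have hδ1 : D < delta1 k a n1 := by rw [hDdef]; rw [hw1] at hiδ; exact hiδ
  -- D < delta2 n2 as well
  have hδ2 : D < delta2 k a n2 := by
    by_contra h
    have hmem : (n1, n2) ∈ S k a :=
      S_of_delta2 hd hale (by exact hn2S) (by exact hdvd)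
        (by show delta2 k a n2 ≤ deg k a (n1, n2); rw [← hDpair]; omega)
    have h2' : delta1 k a n1 ≤ deg k a (n1, n2) := (S_delta1 hk1 ha0 hd hale hmem).2
    rw [← hDpair] at h2'
    omega
  -- first element: degree delta1 n1 - 1
  have hmem1 : delta1 k a n1 - 1 ∈ R := by
    set E := delta1 k a n1 - 1 - D with hEdef
    refine ⟨(n1, n2 + E * a k), ⟨?_, ?_⟩, ?_⟩
    · exact mem_S' hk1 ha0 hd hale (by exact hn1S)
        (S2_add hn2S (d_mem_S2 hk1 ha0 E))
        (by show a k ∣ n1 + (n2 + E * a k)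
            rw [← Nat.add_assoc]
            exact Nat.dvd_add hdvd (dvd_mul_left _ _))
    · intro hmem
      have h' : delta1 k a n1 ≤ deg k a (n1, n2 + E * a k) :=
        (S_delta1 hk1 ha0 hd hale hmem).2
      rw [deg_pair hd E hdvd, ← hDpair] at h'
      omega
    · rw [deg_pair hd E hdvd, ← hDpair]
      omega
  -- second element: degree delta2 n2 - 1
  have hmem2 : delta2 k a n2 - 1 ∈ R := by
    set E := delta2 k a n2 - 1 - D with hEdef
    refine ⟨(n1 + E * a k, n2), ⟨?_, ?_⟩, ?_⟩
    · exact mem_S' hk1 ha0 hd hale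
        (S1_add hn1S (d_mem_S1 hk1 E))
        (by exact hn2S)
        (by show a k ∣ (n1 + E * a k) + n2
            have h : (n1 + E * a k) + n2 = (n1 + n2) + E * a k := by ring
            rw [h]
            exact Nat.dvd_add hdvd (dvd_mul_left _ _))
    · intro hmem
      have h' : delta2 k a n2 ≤ deg k a (n1 + E * a k, n2) :=
        (S_delta2 hd hale hmem).2
      rw [deg_pair' hd E hdvd, ← hDpair] at h'
      omega
    · rw [deg_pair' hd E hdvd, ← hDpair]
      omega
  have hle1 : delta1 k a n1 - 1 ≤ sSup R := le_csSup hRbdd hmem1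
  have hle2 : delta2 k a n2 - 1 ≤ sSup R := le_csSup hRbdd hmem2
  rw [hival, hw1, hw2]
  omega

end ProjMonomialCurve
end

section
/- Assume k < d, a₁ = 1 and a_{k−1} = d − 1, and let ε := max{i ≥ 1 : 1, …, i and d−i, …, d−1 all belong to {a₁,…,a_{k−1}}}. Then reg ≤ ⌊(λ_max − 1)/ε⌋ + 2. -/
namespace ProjMonomialCurve

/-!
Since `1` and `d - 1` lie in `A₁`, both `S₍₁₎` and `S₍₂₎` are all of `ℕ`, so every point of `T`
has negative degree and the bound comes from `S' ∖ S`. A point of `S'` of degree `m` lies in `S`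
once its first coordinate is a sum of `m` elements of `A₁`, and every `n ≤ m d` is such a sum when
`m ≥ ⌊(λ_max - 1)/ε⌋ + 2`: write `n = q d + r` with `r < d` and let `b < r < b'` be the neighbours
of `r` in `A₁`. As `0, …, ε` and `d - ε, …, d` lie in `A₁`, one can climb from `b` to `r` in
`⌈(r - b)/ε⌉` steps, or reach `r` from `b'` by trading `⌈(b' - r)/ε⌉` copies of `d` for elements
of `[d - ε, d]`; since `(r - b) + (b' - r) ≤ λ_max + 1`, one of the two needs at most `m` summands.
-/

open Pointwise

-- `s • A` is the `s`-fold sumset `A + ⋯ + A`, not the dilate `{s * x | x ∈ A}`.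

section Sumset

theorem add_mem_nsmul_add {M : Type*} [AddMonoid M] {A : Set M} {i j : ℕ} {x y : M}
    (hx : x ∈ i • A) (hy : y ∈ j • A) : x + y ∈ (i + j) • A := by
  rw [add_nsmul]
  exact Set.add_mem_add hx hy

variable {A : Set ℕ}

theorem Icc_mul_subset_nsmul_Icc {c c' : ℕ} (h : c ≤ c') (s : ℕ) :
    Set.Icc (s * c) (s * c') ⊆ s • Set.Icc c c' := by
  induction s with
  | zero => simp
  | succ s ih =>
    rintro x ⟨hlo, hhi⟩
    have hcc' : s * c ≤ s * c' := Nat.mul_le_mul_left s h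
    rw [add_one_mul] at hlo hhi
    obtain ⟨y, z, rfl, hy, hz⟩ : ∃ y z, x = y + z ∧ y ∈ Set.Icc (s * c) (s * c') ∧
        z ∈ Set.Icc c c' :=
      ⟨x - min c' (x - s * c), min c' (x - s * c), by omega, ⟨by omega, by omega⟩, by omega,
        by omega⟩
    rw [succ_nsmul]
    exact Set.add_mem_add (ih hy) hz

theorem mem_nsmul_of_le_mul {E s t : ℕ} (hA : Set.Icc 0 E ⊆ A) (ht : t ≤ s * E) :
    t ∈ s • A :=
  Set.nsmul_subset_nsmul_left hA (Icc_mul_subset_nsmul_Icc (Nat.zero_le E) s ⟨by simp, ht⟩)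

theorem mul_sub_mem_nsmul {d E s t : ℕ} (hA : Set.Icc (d - E) d ⊆ A) (hEd : E ≤ d)
    (ht : t ≤ s * E) : s * d - t ∈ s • A := by
  refine Set.nsmul_subset_nsmul_left hA (Icc_mul_subset_nsmul_Icc (Nat.sub_le d E) s ⟨?_, ?_⟩)
  · have : s * E ≤ s * d := Nat.mul_le_mul_left s hEd
    rw [Nat.mul_sub]
    omega
  · exact Nat.sub_le _ _

theorem le_div_add_one_mul {t E : ℕ} (hE : 0 < E) : t ≤ ((t - 1) / E + 1) * E := by
  have := Nat.lt_div_mul_add (a := t - 1) hE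
  rw [add_mul, one_mul]
  omega

theorem Iic_mul_subset_nsmul {d E gap m : ℕ} (hlow : Set.Icc 0 E ⊆ A)
    (hhigh : Set.Icc (d - E) d ⊆ A) (hE : 0 < E) (hEd : E ≤ d)
    (hgap : ∀ r < d, r ∉ A → ∃ b ∈ A, ∃ b' ∈ A, b < r ∧ r < b' ∧ b' ≤ b + gap + 1)
    (hm : (gap - 1) / E + 2 ≤ m) : Set.Iic (m * d) ⊆ m • A := by
  have h0 : 0 ∈ A := hlow ⟨le_rfl, hE.le⟩
  have hmul : ∀ q, q * d ∈ q • A := fun q => by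
    simpa using Set.nsmul_mem_nsmul (n := q) (hhigh ⟨Nat.sub_le d E, le_rfl⟩)
  have hone : ∀ {x}, x ∈ A → x ∈ 1 • A := fun hx => by rwa [one_nsmul]
  intro n hn
  obtain ⟨q, r, rfl, hrd⟩ : ∃ q r, n = q * d + r ∧ r < d :=
    ⟨n / d, n % d, (Nat.div_add_mod' n d).symm, Nat.mod_lt n (by omega)⟩
  rw [Set.mem_Iic] at hn
  rcases Nat.eq_zero_or_pos r with rfl | hr
  · exact Set.nsmul_subset_nsmul_right h0
      (Nat.le_of_mul_le_mul_right (by simpa using hn) (by omega)) (by simpa using hmul q)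
  have hqm : q + 1 ≤ m := Nat.lt_of_mul_lt_mul_right (a := d) (by omega)
  by_cases hrA : r ∈ A
  · exact Set.nsmul_subset_nsmul_right h0 hqm (add_mem_nsmul_add (hmul q) (hone hrA))
  obtain ⟨b, hb, b', hb', hbr, hrb', hbb'⟩ := hgap r hrd hrA
  set s := (r - b - 1) / E + 1
  set s' := (b' - r - 1) / E + 1
  have hs : r - b ≤ s * E := le_div_add_one_mul hE
  have hs' : b' - r ≤ s' * E := le_div_add_one_mul hE
  have hss' : s + s' ≤ m := by
    have : (r - b - 1) / E + (b' - r - 1) / E ≤ (r - b - 1 + (b' - r - 1)) / E :=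
      Nat.div_add_div_le_add_div
    have := Nat.div_le_div_right (c := E) (show r - b - 1 + (b' - r - 1) ≤ gap - 1 by omega)
    omega
  rcases le_or_gt s' q with hq | hq
  · have hdesc := add_mem_nsmul_add
      (add_mem_nsmul_add (hmul (q - s')) (mul_sub_mem_nsmul hhigh hEd hs')) (hone hb')
    have : s' * E ≤ s' * d := Nat.mul_le_mul_left s' hEd
    have : s' * d ≤ q * d := Nat.mul_le_mul_right d hq
    rw [Nat.sub_add_cancel hq, Nat.sub_mul, show q * d - s' * d + (s' * d - (b' - r)) + b' =
      q * d + r by omega] at hdesc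
    exact Set.nsmul_subset_nsmul_right h0 hqm hdesc
  · have hasc := add_mem_nsmul_add (add_mem_nsmul_add (hmul q) (hone hb))
      (mem_nsmul_of_le_mul hlow hs)
    rw [show q * d + b + (r - b) = q * d + r by omega] at hasc
    exact Set.nsmul_subset_nsmul_right h0 (by omega) hasc

end Sumset

theorem exists_le_lt_succ {a : ℕ → ℕ} {k r : ℕ} (h0 : a 0 ≤ r) (hk : r < a k) :
    ∃ j < k, a j ≤ r ∧ r < a (j + 1) := by
  classical
  have hex : ∃ i, r < a i := ⟨k, hk⟩
  have hpos : Nat.find hex ≠ 0 := fun h => (h ▸ Nat.find_spec hex).not_ge h0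
  refine ⟨Nat.find hex - 1, ?_, not_lt.1 (Nat.find_min hex (by omega)), ?_⟩
  · have := Nat.find_min' hex hk
    omega
  · rw [Nat.sub_add_cancel (Nat.one_le_iff_ne_zero.2 hpos)]
    exact Nat.find_spec hex

theorem sSup_runs_mem {P : ℕ → Prop} {N : ℕ} (h1 : P 1) (hN : 0 < N) (hPN : ¬P N) :
    sSup {i | 1 ≤ i ∧ ∀ x, 1 ≤ x → x ≤ i → P x} ∈
      {i | 1 ≤ i ∧ ∀ x, 1 ≤ x → x ≤ i → P x} := by
  refine Nat.sSup_mem ⟨1, le_rfl, fun x hx hx' => le_antisymm hx' hx ▸ h1⟩ ⟨N, ?_⟩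
  rintro i ⟨-, hi⟩
  by_contra! hNi
  exact hPN (hi N hN hNi.le)

section Curve

variable {k : ℕ} {a : ℕ → ℕ}

theorem zero_mem_S : (0 : ℕ × ℕ) ∈ S k a :=
  ⟨fun _ => 0, by simp⟩

theorem add_mem_S {u v : ℕ × ℕ} (hu : u ∈ S k a) (hv : v ∈ S k a) : u + v ∈ S k a := by
  obtain ⟨x, rfl⟩ := hu
  obtain ⟨y, rfl⟩ := hv
  exact ⟨x + y, by simp only [Pi.add_apply, add_smul, Finset.sum_add_distrib]⟩

theorem e_mem_S {j : ℕ} (hj : j ≤ k) : e k a (a j) ∈ S k a :=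
  ⟨fun i => if i = j then 1 else 0, by simp [ite_smul, hj]⟩

theorem dvd_fst_add_snd_of_mem_S (hle : ∀ j ≤ k, a j ≤ a k) {v : ℕ × ℕ} (hv : v ∈ S k a) :
    a k ∣ v.1 + v.2 := by
  obtain ⟨x, rfl⟩ := hv
  refine ⟨∑ i ∈ Finset.range (k + 1), x i, ?_⟩
  simp only [Prod.fst_sum, Prod.snd_sum, e, Prod.smul_mk, smul_eq_mul, ← Finset.sum_add_distrib,
    Finset.mul_sum]
  refine Finset.sum_congr rfl fun i hi => ?_
  rw [← Nat.mul_add, Nat.add_sub_cancel' (hle i (by simpa [Nat.lt_succ_iff] using hi)), mul_comm]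

theorem mk_mem_S_of_mem_nsmul (hle : ∀ j ≤ k, a j ≤ a k) :
    ∀ m, ∀ x ∈ m • A1set k a, x ≤ m * a k ∧ (x, m * a k - x) ∈ S k a
  | 0, x, hx => by
    obtain rfl : x = 0 := by simpa using hx
    exact ⟨Nat.zero_le _, by simp only [zero_mul, Nat.sub_zero]; exact zero_mem_S⟩
  | m + 1, _, hx => by
    rw [succ_nsmul] at hx
    obtain ⟨y, hy, _, ⟨j, hj, rfl⟩, rfl⟩ := Set.mem_add.1 hx
    obtain ⟨hym, hyS⟩ := mk_mem_S_of_mem_nsmul hle m y hy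
    have hjk := hle j hj
    refine ⟨by rw [add_one_mul]; omega, ?_⟩
    convert add_mem_S hyS (e_mem_S hj) using 1
    simp only [e, Prod.mk_add_mk, add_one_mul]
    congr 1
    omega

theorem mem_S_of_mem_S' (hle : ∀ j ≤ k, a j ≤ a k) {u : ℕ × ℕ} (hu : u ∈ S' k a)
    (hA : Set.Iic (deg k a u * a k) ⊆ deg k a u • A1set k a) : u ∈ S k a := by
  obtain ⟨p, hp, -⟩ := hu
  have hdvd : a k ∣ u.1 + u.2 := by
    have := dvd_fst_add_snd_of_mem_S hle hp
    simp only [e, Prod.fst_add, Prod.snd_add, Prod.smul_mk, smul_eq_mul, mul_zero, add_zero,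
      Nat.sub_zero] at this
    exact (Nat.dvd_add_left (dvd_mul_left (a k) p)).1 (by rwa [← add_assoc] at this)
  have hdeg : deg k a u * a k = u.1 + u.2 := Nat.div_mul_cancel hdvd
  have := (mk_mem_S_of_mem_nsmul hle _ u.1 (hA (by rw [Set.mem_Iic]; omega))).2
  rwa [hdeg, Nat.add_sub_cancel_left] at this

theorem mem_S1_of_eq_one {i : ℕ} (hi : i ∈ Finset.Icc 1 k) (h : a i = 1) (n : ℕ) :
    n ∈ S1 k a :=
  ⟨fun j => if j = i then n else 0, by simp [h, hi]⟩

theorem mem_S2_of_eq_one {i : ℕ} (hi : i < k) (h : a k - a i = 1) (n : ℕ) : n ∈ S2 k a :=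
  ⟨fun j => if j = i then n else 0, by simp [h, hi]⟩

theorem degZ_neg_of_mem_T (hd : 0 < a k) (h1 : ∀ n, n ∈ S1 k a) (h2 : ∀ n, n ∈ S2 k a)
    {u : ℤ × ℤ} (hu : u ∈ T k a) : degZ k a u < 0 := by
  obtain ⟨-, hu1, hu2⟩ := hu
  have : u.1 < 0 := by
    by_contra! h
    exact hu1 _ (h1 u.1.toNat) (Int.toNat_of_nonneg h)
  have : u.2 < 0 := by
    by_contra! h
    exact hu2 _ (h2 u.2.toNat) (Int.toNat_of_nonneg h)
  exact Int.ediv_neg_of_neg_of_pos (by omega) (by exact_mod_cast hd)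

theorem reg_le {M : ℤ} (hM : 0 ≤ M) (hS : ∀ u ∈ S' k a \ S k a, (deg k a u : ℤ) + 1 ≤ M)
    (hT : ∀ u ∈ T k a, degZ k a u + 2 ≤ M) : reg k a ≤ M := by
  rw [reg]
  rcases Set.eq_empty_or_nonempty
    ({z : ℤ | ∃ u ∈ S' k a \ S k a, z = (deg k a u : ℤ) + 1} ∪
      {z : ℤ | ∃ u ∈ T k a, z = degZ k a u + 2}) with h | h
  · rw [h, Int.csSup_empty]
    exact hM
  · refine csSup_le h ?_
    rintro z (⟨u, hu, rfl⟩ | ⟨u, hu, rfl⟩)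
    exacts [hS u hu, hT u hu]

theorem exists_gap_A1set (ha0 : a 0 = 0) {r : ℕ} (hr : r < a k) (hrA : r ∉ A1set k a) :
    ∃ b ∈ A1set k a, ∃ b' ∈ A1set k a, b < r ∧ r < b' ∧ b' ≤ b + lamMax k a + 1 := by
  obtain ⟨j, hjk, hjr, hrj⟩ := exists_le_lt_succ (ha0.trans_le (Nat.zero_le r)) hr
  have hgap : a (j + 1) - a (j + 1 - 1) - 1 ≤ lamMax k a :=
    Finset.le_sup (f := fun i => a i - a (i - 1) - 1) (Finset.mem_Icc.2 ⟨by omega, hjk⟩)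
  have hjr' : a j ≠ r := fun h => hrA ⟨j, hjk.le, h⟩
  refine ⟨a j, ⟨j, hjk.le, rfl⟩, a (j + 1), ⟨j + 1, hjk, rfl⟩, by omega, hrj, ?_⟩
  simp only [Nat.add_sub_cancel] at hgap
  omega

theorem Icc_zero_subset_A1set (ha0 : a 0 = 0) {E : ℕ}
    (hE : ∀ x, 1 ≤ x → x ≤ E → ∃ j, 1 ≤ j ∧ j ≤ k - 1 ∧ a j = x) :
    Set.Icc 0 E ⊆ A1set k a := by
  rintro x ⟨-, hx⟩
  rcases Nat.eq_zero_or_pos x with rfl | hx0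
  · exact ⟨0, Nat.zero_le k, ha0⟩
  · obtain ⟨j, -, hj, hjx⟩ := hE x hx0 hx
    exact ⟨j, by omega, hjx⟩

theorem Icc_sub_subset_A1set {E : ℕ}
    (hE : ∀ x, 1 ≤ x → x ≤ E → ∃ j, 1 ≤ j ∧ j ≤ k - 1 ∧ a j = a k - x) :
    Set.Icc (a k - E) (a k) ⊆ A1set k a := by
  rintro y ⟨hy, hyd⟩
  rcases hyd.lt_or_eq with hyd | rfl
  · obtain ⟨j, -, hj, hjy⟩ := hE (a k - y) (by omega) (by omega)
    exact ⟨j, by omega, by omega⟩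
  · exact ⟨k, le_rfl, rfl⟩

end Curve

theorem statement_13_general (k : ℕ) (a : ℕ → ℕ) (hk : 3 ≤ k) (ha0 : a 0 = 0)
    (hmono : ∀ i, i < k → a i < a (i+1))
    (ha1 : a 1 = 1) (hak1 : a (k-1) = a k - 1) :
    reg k a ≤
      (((lamMax k a - 1) /
        sSup {i | 1 ≤ i ∧ ∀ x, 1 ≤ x → x ≤ i →
          (∃ j, 1 ≤ j ∧ j ≤ k - 1 ∧ a j = x) ∧
          (∃ j, 1 ≤ j ∧ j ≤ k - 1 ∧ a j = a k - x)} : ℕ) : ℤ) + 2 := by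
  have hsm : StrictMonoOn a (Set.Iic k) :=
    strictMonoOn_Iic_of_lt_succ fun i hi => by simpa using hmono i hi
  have hle : ∀ j ≤ k, a j ≤ a k := fun j hj => hsm.monotoneOn hj (Set.mem_Iic.2 le_rfl) hj
  have hd : 0 < a k := ha0 ▸ hsm (Nat.zero_le k) (Set.mem_Iic.2 le_rfl) (by omega)
  obtain ⟨hE1, hE⟩ := sSup_runs_mem (N := a k)
    (P := fun x => (∃ j, 1 ≤ j ∧ j ≤ k - 1 ∧ a j = x) ∧
      (∃ j, 1 ≤ j ∧ j ≤ k - 1 ∧ a j = a k - x))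
    ⟨⟨1, le_rfl, by omega, ha1⟩, ⟨k - 1, by omega, le_rfl, by omega⟩⟩ hd
    fun ⟨⟨j, _, hj, hjk⟩, _⟩ =>
      (hsm (show j ≤ k by omega) (Set.mem_Iic.2 le_rfl) (by omega)).ne hjk
  set E := sSup {i | 1 ≤ i ∧ ∀ x, 1 ≤ x → x ≤ i →
    (∃ j, 1 ≤ j ∧ j ≤ k - 1 ∧ a j = x) ∧ (∃ j, 1 ≤ j ∧ j ≤ k - 1 ∧ a j = a k - x)}
  have hlow := Icc_zero_subset_A1set ha0 fun x h1 h2 => (hE x h1 h2).1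
  have hhigh := Icc_sub_subset_A1set fun x h1 h2 => (hE x h1 h2).2
  have hEd : E ≤ a k := by
    obtain ⟨j, hj, hjE⟩ := hlow ⟨Nat.zero_le E, le_rfl⟩
    exact hjE ▸ hle j hj
  refine reg_le (by positivity) (fun u ⟨hu, huS⟩ => ?_) (fun u hu => ?_)
  · by_contra! h
    exact huS (mem_S_of_mem_S' hle hu (Iic_mul_subset_nsmul hlow hhigh hE1 hEd
      (fun r hr hrA => exists_gap_A1set ha0 hr hrA) (by omega)))
  · have := degZ_neg_of_mem_T hd (mem_S1_of_eq_one (i := 1) (by simp; omega) ha1)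
      (mem_S2_of_eq_one (i := k - 1) (by omega) (by omega)) hu
    linarith [Int.natCast_nonneg ((lamMax k a - 1) / E)]

theorem statement_13 (k : ℕ) (a : ℕ → ℕ) (hk : 3 ≤ k) (ha0 : a 0 = 0)
    (hmono : ∀ i, i < k → a i < a (i+1)) (hgcd : (Finset.Icc 1 k).gcd a = 1)
    (hkd : k < a k) (ha1 : a 1 = 1) (hak1 : a (k-1) = a k - 1) :
    reg k a ≤
      (((lamMax k a - 1) /
        sSup {i | 1 ≤ i ∧ ∀ x, 1 ≤ x → x ≤ i →
          (∃ j, 1 ≤ j ∧ j ≤ k - 1 ∧ a j = x) ∧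
          (∃ j, 1 ≤ j ∧ j ≤ k - 1 ∧ a j = a k - x)} : ℕ) : ℤ) + 2 :=
  statement_13_general k a hk ha0 hmono ha1 hak1

end ProjMonomialCurve
end
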